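/- arXiv:1809.05627 — 5 statements merged into one kernel-verified Lean document; each statement's English description precedes it below -/
import Mathlib

section
/- Splitting a node of a partition-based marker cannot decrease the concordance: let a partition T = {τ₁,...,τ_M} be refined to T' = {τ₁ᴸ, τ₁ᴿ, τ₂,...,τ_M}, where τ₁ = τ₁ᴸ ∪ τ₁ᴿ (disjoint), and let the partition-based markers assign each node its conditional case rate λ(τ) = P(D=1 | Z ∈ τ). Then CON(T') ≥ CON(T), with equality if and only if λ(τ₁ᴸ) = λ(τ₁ᴿ) = λ(τ₁), where CON(T) is the concordance probability of the marker z ↦ λ(l_T(z)) (with ties counted with weight 1/2) between an independent case and control. -/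
open MeasureTheory ProbabilityTheory Filter Set Topology

noncomputable def stmt5W (x y : ℝ) : ℝ := if y < x then 1 else if x = y then 1/2 else 0

lemma stmt5_pair_meas {Ω E : Type*} [MeasurableSpace Ω] [MeasurableSpace E]
    (μ : Measure Ω) [SigmaFinite μ] (Z : Ω → E) (hZ : Measurable Z)
    (D1 D2 : Set Ω) (hD1 : MeasurableSet D1) (hD2 : MeasurableSet D2)
    {ι : Type*} [Fintype ι] (σ : ι → Set E) (hσ : ∀ i, MeasurableSet (σ i))
    (hdisj : Pairwise (Function.onFun Disjoint σ)) (hcover : (⋃ i, σ i) = Set.univ)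
    (k : E → ℝ) (v : ι → ℝ) (hk : ∀ i, ∀ z ∈ σ i, k z = v i)
    (r : ℝ → ℝ → Prop) [DecidableRel r] :
    (μ.prod μ) (D1 ×ˢ D2 ∩ {p : Ω × Ω | r (k (Z p.1)) (k (Z p.2))}) =
      ∑ q : ι × ι, if r (v q.1) (v q.2)
        then μ (D1 ∩ Z ⁻¹' σ q.1) * μ (D2 ∩ Z ⁻¹' σ q.2) else 0 := by
  have hset : D1 ×ˢ D2 ∩ {p : Ω × Ω | r (k (Z p.1)) (k (Z p.2))} =
      ⋃ q : ι × ι, if r (v q.1) (v q.2)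
        then (D1 ∩ Z ⁻¹' σ q.1) ×ˢ (D2 ∩ Z ⁻¹' σ q.2) else ∅ := by
    ext p
    obtain ⟨i, hi⟩ : ∃ i, Z p.1 ∈ σ i := by
      have : Z p.1 ∈ ⋃ i, σ i := hcover ▸ Set.mem_univ _
      simpa using this
    obtain ⟨j, hj⟩ : ∃ j, Z p.2 ∈ σ j := by
      have : Z p.2 ∈ ⋃ i, σ i := hcover ▸ Set.mem_univ _
      simpa using this
    simp only [Set.mem_inter_iff, Set.mem_iUnion, Set.mem_setOf_eq, Set.mem_prod]
    constructor
    · rintro ⟨⟨hp1, hp2⟩, hr⟩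
      refine ⟨(i, j), ?_⟩
      rw [if_pos (by rwa [← hk i _ hi, ← hk j _ hj])]
      exact ⟨⟨hp1, hi⟩, hp2, hj⟩
    · rintro ⟨q, hq⟩
      by_cases hrq : r (v q.1) (v q.2)
      · rw [if_pos hrq] at hq
        obtain ⟨⟨hp1, hq1⟩, hp2, hq2⟩ := hq
        exact ⟨⟨hp1, hp2⟩, by rw [hk q.1 _ hq1, hk q.2 _ hq2]; exact hrq⟩
      · rw [if_neg hrq] at hq
        exact absurd hq (Set.notMem_empty p)
  have hdis : Pairwise (Function.onFun Disjoint fun q : ι × ι =>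
      if r (v q.1) (v q.2) then (D1 ∩ Z ⁻¹' σ q.1) ×ˢ (D2 ∩ Z ⁻¹' σ q.2) else ∅) := by
    intro q q' hne
    unfold Function.onFun
    dsimp only
    by_cases hr : r (v q.1) (v q.2)
    · by_cases hr' : r (v q'.1) (v q'.2)
      · rw [if_pos hr, if_pos hr']
        by_cases h1 : q.1 = q'.1
        · have h2 : q.2 ≠ q'.2 := fun h2 => hne (Prod.ext h1 h2)
          exact Disjoint.set_prod_right
            (Disjoint.mono Set.inter_subset_right Set.inter_subset_right
              ((hdisj h2).preimage Z)) _ _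
        · exact Disjoint.set_prod_left
            (Disjoint.mono Set.inter_subset_right Set.inter_subset_right
              ((hdisj h1).preimage Z)) _ _
      · rw [if_neg hr']; exact Set.disjoint_empty _
    · rw [if_neg hr]; exact Set.empty_disjoint _
  have hmeas : ∀ q : ι × ι, MeasurableSet (if r (v q.1) (v q.2)
      then (D1 ∩ Z ⁻¹' σ q.1) ×ˢ (D2 ∩ Z ⁻¹' σ q.2) else ∅) := by
    intro q
    by_cases hr : r (v q.1) (v q.2)
    · rw [if_pos hr]; exact (hD1.inter (hZ (hσ q.1))).prod (hD2.inter (hZ (hσ q.2)))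
    · rw [if_neg hr]; exact MeasurableSet.empty
  rw [hset, measure_iUnion hdis hmeas, tsum_fintype]
  refine Finset.sum_congr rfl fun q _ => ?_
  by_cases hr : r (v q.1) (v q.2)
  · rw [if_pos hr, if_pos hr, Measure.prod_prod]
  · rw [if_neg hr, if_neg hr, measure_empty]

lemma stmt5_con_formula {Ω E : Type*} [MeasurableSpace Ω] [MeasurableSpace E]
    (μ : Measure Ω) [IsProbabilityMeasure μ] (Z : Ω → E) (hZ : Measurable Z)
    (D : Set Ω) (hD : MeasurableSet D)
    {ι : Type*} [Fintype ι] (σ : ι → Set E) (hσ : ∀ i, MeasurableSet (σ i))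
    (hdisj : Pairwise (Function.onFun Disjoint σ)) (hcover : (⋃ i, σ i) = Set.univ)
    (k : E → ℝ) (v : ι → ℝ) (hk : ∀ i, ∀ z ∈ σ i, k z = v i) :
    ((μ.prod μ)[|D ×ˢ Dᶜ] {p : Ω × Ω | k (Z p.1) > k (Z p.2)}).toReal
      + (1/2) * ((μ.prod μ)[|D ×ˢ Dᶜ] {p : Ω × Ω | k (Z p.1) = k (Z p.2)}).toReal
    = (∑ q : ι × ι, stmt5W (v q.1) (v q.2) *
        ((μ (D ∩ Z ⁻¹' σ q.1)).toReal * (μ (Dᶜ ∩ Z ⁻¹' σ q.2)).toReal))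
      / ((μ D).toReal * (μ Dᶜ).toReal) := by
  have hprod : (μ.prod μ) (D ×ˢ Dᶜ) = μ D * μ Dᶜ := by rw [Measure.prod_prod]
  have h1 : (μ.prod μ) (D ×ˢ Dᶜ ∩ {p : Ω × Ω | k (Z p.1) > k (Z p.2)}) =
      ∑ q : ι × ι, if v q.1 > v q.2
        then μ (D ∩ Z ⁻¹' σ q.1) * μ (Dᶜ ∩ Z ⁻¹' σ q.2) else 0 :=
    stmt5_pair_meas μ Z hZ D Dᶜ hD hD.compl σ hσ hdisj hcover k v hk (· > ·)
  have h2 : (μ.prod μ) (D ×ˢ Dᶜ ∩ {p : Ω × Ω | k (Z p.1) = k (Z p.2)}) =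
      ∑ q : ι × ι, if v q.1 = v q.2
        then μ (D ∩ Z ⁻¹' σ q.1) * μ (Dᶜ ∩ Z ⁻¹' σ q.2) else 0 :=
    stmt5_pair_meas μ Z hZ D Dᶜ hD hD.compl σ hσ hdisj hcover k v hk (· = ·)
  rw [cond_apply (hD.prod hD.compl), cond_apply (hD.prod hD.compl), hprod, h1, h2]
  have htr : ∀ (P : ι × ι → Prop) (_ : DecidablePred P),
      (∑ q : ι × ι, if P q then μ (D ∩ Z ⁻¹' σ q.1) * μ (Dᶜ ∩ Z ⁻¹' σ q.2) else 0).toReal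
      = ∑ q : ι × ι, (if P q then
          (μ (D ∩ Z ⁻¹' σ q.1)).toReal * (μ (Dᶜ ∩ Z ⁻¹' σ q.2)).toReal else 0) := by
    intro P hP
    rw [ENNReal.toReal_sum]
    · refine Finset.sum_congr rfl fun q _ => ?_
      split_ifs with hq
      · exact ENNReal.toReal_mul
      · rfl
    · intro q _
      split_ifs
      · exact ENNReal.mul_ne_top (measure_ne_top μ _) (measure_ne_top μ _)
      · exact ENNReal.zero_ne_top
  rw [ENNReal.toReal_mul, ENNReal.toReal_mul, ENNReal.toReal_inv, ENNReal.toReal_mul,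
    htr _ (fun q => inferInstance), htr _ (fun q => inferInstance)]
  have hsum : ∑ q : ι × ι, stmt5W (v q.1) (v q.2) *
        ((μ (D ∩ Z ⁻¹' σ q.1)).toReal * (μ (Dᶜ ∩ Z ⁻¹' σ q.2)).toReal)
      = (∑ q : ι × ι, if v q.1 > v q.2 then
          (μ (D ∩ Z ⁻¹' σ q.1)).toReal * (μ (Dᶜ ∩ Z ⁻¹' σ q.2)).toReal else 0)
        + (1/2) * ∑ q : ι × ι, if v q.1 = v q.2 then
          (μ (D ∩ Z ⁻¹' σ q.1)).toReal * (μ (Dᶜ ∩ Z ⁻¹' σ q.2)).toReal else 0 := by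
    rw [Finset.mul_sum, ← Finset.sum_add_distrib]
    refine Finset.sum_congr rfl fun q _ => ?_
    unfold stmt5W
    split_ifs with c1 c2 <;> first | ring1 | linarith
  rw [hsum, div_eq_mul_inv]
  ring

lemma stmt5_max_abs (x y : ℝ) : max x y = (x + y + |x - y|) / 2 := by
  rcases le_total x y with hc | hc
  · rw [max_eq_right hc, abs_of_nonpos (by linarith)]; ring
  · rw [max_eq_left hc, abs_of_nonneg (by linarith)]; ring

lemma stmt5_ratio_lt {a b c d : ℝ} (ha : 0 < a) (hb : 0 < b) (hc : 0 < c) (hd : 0 < d) :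
    a / (a + b) < c / (c + d) ↔ a * d < c * b := by
  rw [div_lt_div_iff₀ (by linarith) (by linarith)]
  constructor <;> intro hx <;> nlinarith

lemma stmt5_ratio_eq {a b c d : ℝ} (ha : 0 < a) (hb : 0 < b) (hc : 0 < c) (hd : 0 < d) :
    a / (a + b) = c / (c + d) ↔ a * d = c * b := by
  rw [div_eq_div_iff (by linarith) (by linarith)]
  constructor <;> intro hx <;> nlinarith

lemma stmt5_wsum {ι : Type*} [Fintype ι] (v a b : ι → ℝ)
    (hlt : ∀ i j, v i < v j ↔ a i * b j < a j * b i)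
    (heq : ∀ i j, v i = v j ↔ a i * b j = a j * b i) :
    ∑ q : ι × ι, stmt5W (v q.1) (v q.2) * (a q.1 * b q.2)
      = (1/2) * ∑ q : ι × ι, max (a q.1 * b q.2) (a q.2 * b q.1) := by
  have hswap : ∑ q : ι × ι, stmt5W (v q.1) (v q.2) * (a q.1 * b q.2)
      = ∑ q : ι × ι, stmt5W (v q.2) (v q.1) * (a q.2 * b q.1) :=
    Fintype.sum_equiv (Equiv.prodComm ι ι) _ _ (fun q => rfl)
  have key : ∀ q : ι × ι, stmt5W (v q.1) (v q.2) * (a q.1 * b q.2)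
      + stmt5W (v q.2) (v q.1) * (a q.2 * b q.1)
      = max (a q.1 * b q.2) (a q.2 * b q.1) := by
    intro q
    unfold stmt5W
    rcases lt_trichotomy (v q.1) (v q.2) with hc | hc | hc
    · rw [if_neg (lt_asymm hc), if_neg (ne_of_lt hc), if_pos hc,
        max_eq_right ((hlt q.1 q.2).1 hc).le]
      ring
    · rw [if_neg (by rw [hc]; exact lt_irrefl _), if_pos hc,
        if_neg (by rw [hc]; exact lt_irrefl _), if_pos hc.symm,
        (heq q.1 q.2).1 hc, max_self]
      ring
    · rw [if_pos hc, if_neg (lt_asymm hc), if_neg (ne_of_lt hc),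
        max_eq_left ((hlt q.2 q.1).1 hc).le]
      ring
  have h2 : (∑ q : ι × ι, stmt5W (v q.1) (v q.2) * (a q.1 * b q.2))
      + ∑ q : ι × ι, stmt5W (v q.2) (v q.1) * (a q.2 * b q.1)
      = ∑ q : ι × ι, max (a q.1 * b q.2) (a q.2 * b q.1) := by
    rw [← Finset.sum_add_distrib]
    exact Finset.sum_congr rfl fun q _ => key q
  linarith [hswap, h2]

lemma stmt5_max_sum {ι : Type*} [Fintype ι] (a b : ι → ℝ) :
    ∑ q : ι × ι, max (a q.1 * b q.2) (a q.2 * b q.1)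
      = (∑ i, a i) * (∑ i, b i)
        + (1/2) * ∑ q : ι × ι, |a q.1 * b q.2 - a q.2 * b q.1| := by
  have e1 : ∑ q : ι × ι, a q.1 * b q.2 = (∑ i, a i) * (∑ i, b i) := by
    rw [Fintype.sum_prod_type]
    exact (Fintype.sum_mul_sum _ _).symm
  have e2 : ∑ q : ι × ι, a q.2 * b q.1 = (∑ i, a i) * (∑ i, b i) := by
    rw [← e1]
    exact Fintype.sum_equiv (Equiv.prodComm ι ι) _ _ (fun q => rfl)
  have hterm : ∀ q : ι × ι, max (a q.1 * b q.2) (a q.2 * b q.1)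
      = (a q.1 * b q.2)/2 + (a q.2 * b q.1)/2 + |a q.1 * b q.2 - a q.2 * b q.1|/2 := by
    intro q; rw [stmt5_max_abs]; ring
  rw [Finset.sum_congr rfl fun q _ => hterm q, Finset.sum_add_distrib,
    Finset.sum_add_distrib, ← Finset.sum_div, ← Finset.sum_div, ← Finset.sum_div, e1, e2]
  ring

def stmt5ext {α : Type*} {M : ℕ} (x : Fin (M+1) → α) (xL xR : α) : Fin M ⊕ Bool → α
  | .inl j => x j.succ
  | .inr false => xL
  | .inr true => xR

lemma stmt5ext_sum {M : ℕ} (x : Fin (M+1) → ℝ) (xL xR : ℝ) (h0 : x 0 = xL + xR) :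
    ∑ i, stmt5ext x xL xR i = ∑ i, x i := by
  rw [Fintype.sum_sum_type, Fintype.sum_bool, Fin.sum_univ_succ, h0]
  simp only [stmt5ext]
  ring

lemma stmt5_expandL {M : ℕ} (a b : Fin (M+1) → ℝ) :
    ∑ q : Fin (M+1) × Fin (M+1), |a q.1 * b q.2 - a q.2 * b q.1| =
      (∑ i : Fin M, ∑ j : Fin M, |a i.succ * b j.succ - a j.succ * b i.succ|)
      + (∑ i : Fin M, |a i.succ * b 0 - a 0 * b i.succ|)
      + (∑ j : Fin M, |a 0 * b j.succ - a j.succ * b 0|) := by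
  rw [Fintype.sum_prod_type]
  simp only [Fin.sum_univ_succ, sub_self, abs_zero, zero_add, Finset.sum_add_distrib]
  ring

lemma stmt5_expandR {M : ℕ} (a b : Fin (M+1) → ℝ) (aL aR bL bR : ℝ) :
    ∑ q : (Fin M ⊕ Bool) × (Fin M ⊕ Bool),
        |stmt5ext a aL aR q.1 * stmt5ext b bL bR q.2
          - stmt5ext a aL aR q.2 * stmt5ext b bL bR q.1| =
      (∑ i : Fin M, ∑ j : Fin M, |a i.succ * b j.succ - a j.succ * b i.succ|)
      + (∑ i : Fin M, (|a i.succ * bL - aL * b i.succ| + |a i.succ * bR - aR * b i.succ|))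
      + (∑ j : Fin M, (|aL * b j.succ - a j.succ * bL| + |aR * b j.succ - a j.succ * bR|))
      + 2 * |aL * bR - aR * bL| := by
  rw [Fintype.sum_prod_type]
  simp only [Fintype.sum_sum_type, Fintype.sum_bool, stmt5ext, sub_self, abs_zero,
    Finset.sum_add_distrib, add_zero, zero_add]
  rw [abs_sub_comm (aR * bL) (aL * bR)]
  ring

lemma stmt5_core {M : ℕ} (a b : Fin (M+1) → ℝ) (aL aR bL bR : ℝ)
    (ha0 : a 0 = aL + aR) (hb0 : b 0 = bL + bR) :
    (∑ q : Fin (M+1) × Fin (M+1), |a q.1 * b q.2 - a q.2 * b q.1|) + 2 * |aL * bR - aR * bL|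
      ≤ ∑ q : (Fin M ⊕ Bool) × (Fin M ⊕ Bool),
          |stmt5ext a aL aR q.1 * stmt5ext b bL bR q.2
            - stmt5ext a aL aR q.2 * stmt5ext b bL bR q.1| := by
  rw [stmt5_expandL, stmt5_expandR a b aL aR bL bR]
  have s1 : (∑ i : Fin M, |a i.succ * b 0 - a 0 * b i.succ|)
      ≤ ∑ i : Fin M, (|a i.succ * bL - aL * b i.succ| + |a i.succ * bR - aR * b i.succ|) := by
    refine Finset.sum_le_sum fun i _ => ?_
    rw [ha0, hb0, show a i.succ * (bL + bR) - (aL + aR) * b i.succ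
      = (a i.succ * bL - aL * b i.succ) + (a i.succ * bR - aR * b i.succ) by ring]
    exact abs_add_le _ _
  have s2 : (∑ j : Fin M, |a 0 * b j.succ - a j.succ * b 0|)
      ≤ ∑ j : Fin M, (|aL * b j.succ - a j.succ * bL| + |aR * b j.succ - a j.succ * bR|) := by
    refine Finset.sum_le_sum fun j _ => ?_
    rw [ha0, hb0, show (aL + aR) * b j.succ - a j.succ * (bL + bR)
      = (aL * b j.succ - a j.succ * bL) + (aR * b j.succ - a j.succ * bR) by ring]
    exact abs_add_le _ _
  linarith [s1, s2]

lemma stmt5_core_eq {M : ℕ} (a b : Fin (M+1) → ℝ) (aL aR bL bR : ℝ)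
    (haL : 0 < aL) (hbL : 0 < bL) (haR : 0 < aR)
    (ha0 : a 0 = aL + aR) (hb0 : b 0 = bL + bR) (hd : aL * bR = aR * bL) :
    ∑ q : (Fin M ⊕ Bool) × (Fin M ⊕ Bool),
        |stmt5ext a aL aR q.1 * stmt5ext b bL bR q.2
          - stmt5ext a aL aR q.2 * stmt5ext b bL bR q.1|
      = ∑ q : Fin (M+1) × Fin (M+1), |a q.1 * b q.2 - a q.2 * b q.1| := by
  have hs : 0 < aR / aL := div_pos haR haL
  have haR' : aR = (aR / aL) * aL := by field_simp
  have hbR' : bR = (aR / aL) * bL := by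
    rw [div_mul_eq_mul_div, eq_div_iff (ne_of_gt haL)]
    linear_combination hd
  rw [stmt5_expandL, stmt5_expandR a b aL aR bL bR]
  have s1 : ∀ i : Fin M, |a i.succ * bL - aL * b i.succ| + |a i.succ * bR - aR * b i.succ|
      = |a i.succ * b 0 - a 0 * b i.succ| := by
    intro i
    rw [ha0, hb0, haR', hbR',
      show a i.succ * ((aR/aL) * bL) - (aR/aL) * aL * b i.succ
        = (aR/aL) * (a i.succ * bL - aL * b i.succ) by ring,
      show a i.succ * (bL + (aR/aL) * bL) - (aL + (aR/aL) * aL) * b i.succ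
        = (1 + aR/aL) * (a i.succ * bL - aL * b i.succ) by ring,
      abs_mul, abs_mul, abs_of_nonneg hs.le, abs_of_nonneg (by linarith : (0:ℝ) ≤ 1 + aR/aL)]
    ring
  have s2 : ∀ j : Fin M, |aL * b j.succ - a j.succ * bL| + |aR * b j.succ - a j.succ * bR|
      = |a 0 * b j.succ - a j.succ * b 0| := by
    intro j
    rw [ha0, hb0, haR', hbR',
      show (aR/aL) * aL * b j.succ - a j.succ * ((aR/aL) * bL)
        = (aR/aL) * (aL * b j.succ - a j.succ * bL) by ring,
      show (aL + (aR/aL) * aL) * b j.succ - a j.succ * (bL + (aR/aL) * bL)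
        = (1 + aR/aL) * (aL * b j.succ - a j.succ * bL) by ring,
      abs_mul, abs_mul, abs_of_nonneg hs.le, abs_of_nonneg (by linarith : (0:ℝ) ≤ 1 + aR/aL)]
    ring
  have hz : |aL * bR - aR * bL| = 0 := by rw [hd, sub_self, abs_zero]
  rw [Finset.sum_congr rfl fun i _ => s1 i, Finset.sum_congr rfl fun j _ => s2 j, hz]
  ring

/-- Splitting a node of a partition-based marker cannot decrease the
concordance.  If the partition `T = {τ₀, τ₁, …, τ_M}` is refined to
`T' = {τᴸ, τᴿ, τ₁, …, τ_M}` with `τ₀ = τᴸ ∪ τᴿ` disjoint, and each node is assigned its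
conditional case rate `λ(τ) = P(D=1 | Z ∈ τ)`, then `CON(T') ≥ CON(T)`, with equality if
and only if `λ(τᴸ) = λ(τᴿ) = λ(τ₀)`. -/
theorem stmt5 {Ω E : Type*} [MeasurableSpace Ω] [MeasurableSpace E]
    (μ : Measure Ω) [IsProbabilityMeasure μ]
    (Z : Ω → E) (hZ : Measurable Z)
    (D : Set Ω) (hD : MeasurableSet D)
    (M : ℕ) (τ : Fin (M + 1) → Set E)
    (hτmeas : ∀ j, MeasurableSet (τ j))
    (hdisj : Pairwise (Function.onFun Disjoint τ))
    (hcover : (⋃ j, τ j) = Set.univ)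
    (τL τR : Set E) (hLR : τL ∪ τR = τ 0) (hdLR : Disjoint τL τR)
    (hτL : MeasurableSet τL) (hτR : MeasurableSet τR)
    -- every node contains both cases and controls with positive probability
    (hposτ : ∀ j, 0 < μ (D ∩ Z ⁻¹' τ j) ∧ 0 < μ (Dᶜ ∩ Z ⁻¹' τ j))
    (hposL : 0 < μ (D ∩ Z ⁻¹' τL) ∧ 0 < μ (Dᶜ ∩ Z ⁻¹' τL))
    (hposR : 0 < μ (D ∩ Z ⁻¹' τR) ∧ 0 < μ (Dᶜ ∩ Z ⁻¹' τR))
    -- node-wise conditional case rate λ(A) = P(D = 1 | Z ∈ A)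
    (lam : Set E → ℝ) (hlamdef : ∀ A : Set E, lam A = (μ[|Z ⁻¹' A] D).toReal)
    -- partition-based markers before and after the split
    (h h' : E → ℝ)
    (hh : ∀ j, ∀ z ∈ τ j, h z = lam (τ j))
    (hh'L : ∀ z ∈ τL, h' z = lam τL) (hh'R : ∀ z ∈ τR, h' z = lam τR)
    (hh' : ∀ j, j ≠ 0 → ∀ z ∈ τ j, h' z = lam (τ j))
    -- the concordance (ties weighted 1/2) of a marker between an independent case
    -- and control
    (CON : (E → ℝ) → ℝ)
    (hCON : ∀ k : E → ℝ, CON k =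
      ((μ.prod μ)[|D ×ˢ Dᶜ] {p | k (Z p.1) > k (Z p.2)}).toReal
      + (1/2) * ((μ.prod μ)[|D ×ˢ Dᶜ] {p | k (Z p.1) = k (Z p.2)}).toReal) :
    CON h ≤ CON h' ∧
    (CON h' = CON h ↔ lam τL = lam (τ 0) ∧ lam τR = lam (τ 0)) := by
  -- positivity
  have hA : 0 < (μ D).toReal :=
    ENNReal.toReal_pos ((hposτ 0).1.trans_le (measure_mono Set.inter_subset_left)).ne'
      (measure_ne_top _ _)
  have hB : 0 < (μ Dᶜ).toReal :=
    ENNReal.toReal_pos ((hposτ 0).2.trans_le (measure_mono Set.inter_subset_left)).ne'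
      (measure_ne_top _ _)
  have hABpos : 0 < (μ D).toReal * (μ Dᶜ).toReal := mul_pos hA hB
  have hABne : (μ D).toReal * (μ Dᶜ).toReal ≠ 0 := hABpos.ne'
  have hpa : ∀ j, 0 < (μ (D ∩ Z ⁻¹' τ j)).toReal :=
    fun j => ENNReal.toReal_pos (hposτ j).1.ne' (measure_ne_top _ _)
  have hpb : ∀ j, 0 < (μ (Dᶜ ∩ Z ⁻¹' τ j)).toReal :=
    fun j => ENNReal.toReal_pos (hposτ j).2.ne' (measure_ne_top _ _)
  have hpaL : 0 < (μ (D ∩ Z ⁻¹' τL)).toReal :=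
    ENNReal.toReal_pos hposL.1.ne' (measure_ne_top _ _)
  have hpbL : 0 < (μ (Dᶜ ∩ Z ⁻¹' τL)).toReal :=
    ENNReal.toReal_pos hposL.2.ne' (measure_ne_top _ _)
  have hpaR : 0 < (μ (D ∩ Z ⁻¹' τR)).toReal :=
    ENNReal.toReal_pos hposR.1.ne' (measure_ne_top _ _)
  have hpbR : 0 < (μ (Dᶜ ∩ Z ⁻¹' τR)).toReal :=
    ENNReal.toReal_pos hposR.2.ne' (measure_ne_top _ _)
  -- the value of lam
  have hlam : ∀ A : Set E, MeasurableSet A →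
      lam A = (μ (D ∩ Z ⁻¹' A)).toReal
        / ((μ (D ∩ Z ⁻¹' A)).toReal + (μ (Dᶜ ∩ Z ⁻¹' A)).toReal) := by
    intro A hAm
    have hsplit : μ (Z ⁻¹' A) = μ (D ∩ Z ⁻¹' A) + μ (Dᶜ ∩ Z ⁻¹' A) := by
      rw [Set.inter_comm D, Set.inter_comm Dᶜ, ← Set.diff_eq, measure_inter_add_diff _ hD]
    rw [hlamdef, cond_apply (hZ hAm), hsplit, Set.inter_comm (Z ⁻¹' A) D,
      ENNReal.toReal_mul, ENNReal.toReal_inv,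
      ENNReal.toReal_add (measure_ne_top _ _) (measure_ne_top _ _), inv_mul_eq_div]
  have hlamτ : ∀ j, lam (τ j) = (μ (D ∩ Z ⁻¹' τ j)).toReal
      / ((μ (D ∩ Z ⁻¹' τ j)).toReal + (μ (Dᶜ ∩ Z ⁻¹' τ j)).toReal) :=
    fun j => hlam (τ j) (hτmeas j)
  have hlamL : lam τL = (μ (D ∩ Z ⁻¹' τL)).toReal
      / ((μ (D ∩ Z ⁻¹' τL)).toReal + (μ (Dᶜ ∩ Z ⁻¹' τL)).toReal) := hlam τL hτL
  have hlamR : lam τR = (μ (D ∩ Z ⁻¹' τR)).toReal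
      / ((μ (D ∩ Z ⁻¹' τR)).toReal + (μ (Dᶜ ∩ Z ⁻¹' τR)).toReal) := hlam τR hτR
  -- additivity of masses across the split
  have ha0 : (μ (D ∩ Z ⁻¹' τ 0)).toReal
      = (μ (D ∩ Z ⁻¹' τL)).toReal + (μ (D ∩ Z ⁻¹' τR)).toReal := by
    rw [← ENNReal.toReal_add (measure_ne_top _ _) (measure_ne_top _ _)]
    congr 1
    rw [← hLR, Set.preimage_union, Set.inter_union_distrib_left]
    exact measure_union
      (Disjoint.mono Set.inter_subset_right Set.inter_subset_right (hdLR.preimage Z))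
      (hD.inter (hZ hτR))
  have hb0 : (μ (Dᶜ ∩ Z ⁻¹' τ 0)).toReal
      = (μ (Dᶜ ∩ Z ⁻¹' τL)).toReal + (μ (Dᶜ ∩ Z ⁻¹' τR)).toReal := by
    rw [← ENNReal.toReal_add (measure_ne_top _ _) (measure_ne_top _ _)]
    congr 1
    rw [← hLR, Set.preimage_union, Set.inter_union_distrib_left]
    exact measure_union
      (Disjoint.mono Set.inter_subset_right Set.inter_subset_right (hdLR.preimage Z))
      (hD.compl.inter (hZ hτR))
  -- the refined partition
  have hσ'meas : ∀ i, MeasurableSet (stmt5ext τ τL τR i) := by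
    intro i
    match i with
    | .inl j => exact hτmeas j.succ
    | .inr false => exact hτL
    | .inr true => exact hτR
  have hsubL : τL ⊆ τ 0 := hLR ▸ Set.subset_union_left
  have hsubR : τR ⊆ τ 0 := hLR ▸ Set.subset_union_right
  have hdisj' : Pairwise (Function.onFun Disjoint (stmt5ext τ τL τR)) := by
    intro i j hne
    unfold Function.onFun
    match i, j with
    | .inl i, .inl j =>
      have hij : i ≠ j := fun hq => hne (by rw [hq])
      exact hdisj ((Fin.succ_injective _).ne hij)
    | .inl i, .inr false => exact (hdisj (Fin.succ_ne_zero i)).mono_right hsubL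
    | .inl i, .inr true => exact (hdisj (Fin.succ_ne_zero i)).mono_right hsubR
    | .inr false, .inl j => exact ((hdisj (Fin.succ_ne_zero j)).mono_right hsubL).symm
    | .inr true, .inl j => exact ((hdisj (Fin.succ_ne_zero j)).mono_right hsubR).symm
    | .inr false, .inr true => exact hdLR
    | .inr true, .inr false => exact hdLR.symm
    | .inr false, .inr false => exact absurd rfl hne
    | .inr true, .inr true => exact absurd rfl hne
  have hcover' : (⋃ i, stmt5ext τ τL τR i) = Set.univ := by
    apply Set.eq_univ_iff_forall.mpr
    intro z
    have hz : z ∈ ⋃ j, τ j := hcover ▸ Set.mem_univ z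
    rw [Set.mem_iUnion] at hz
    obtain ⟨j, hj⟩ := hz
    rw [Set.mem_iUnion]
    rcases Fin.eq_zero_or_eq_succ j with rfl | ⟨i, rfl⟩
    · rw [← hLR] at hj
      rcases hj with hj | hj
      · exact ⟨Sum.inr false, hj⟩
      · exact ⟨Sum.inr true, hj⟩
    · exact ⟨Sum.inl i, hj⟩
  have hk' : ∀ i, ∀ z ∈ stmt5ext τ τL τR i,
      h' z = stmt5ext (fun j => lam (τ j)) (lam τL) (lam τR) i := by
    intro i
    match i with
    | .inl j => exact hh' j.succ (Fin.succ_ne_zero j)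
    | .inr false => exact hh'L
    | .inr true => exact hh'R
  have haexta : ∀ i, (μ (D ∩ Z ⁻¹' stmt5ext τ τL τR i)).toReal
      = stmt5ext (fun j => (μ (D ∩ Z ⁻¹' τ j)).toReal)
          ((μ (D ∩ Z ⁻¹' τL)).toReal) ((μ (D ∩ Z ⁻¹' τR)).toReal) i := by
    intro i
    match i with
    | .inl j => rfl
    | .inr false => rfl
    | .inr true => rfl
  have haextb : ∀ i, (μ (Dᶜ ∩ Z ⁻¹' stmt5ext τ τL τR i)).toReal
      = stmt5ext (fun j => (μ (Dᶜ ∩ Z ⁻¹' τ j)).toReal)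
          ((μ (Dᶜ ∩ Z ⁻¹' τL)).toReal) ((μ (Dᶜ ∩ Z ⁻¹' τR)).toReal) i := by
    intro i
    match i with
    | .inl j => rfl
    | .inr false => rfl
    | .inr true => rfl
  -- CON formulas
  have hCONh : CON h = (∑ q : Fin (M + 1) × Fin (M + 1),
      stmt5W (lam (τ q.1)) (lam (τ q.2)) *
        ((μ (D ∩ Z ⁻¹' τ q.1)).toReal * (μ (Dᶜ ∩ Z ⁻¹' τ q.2)).toReal))
      / ((μ D).toReal * (μ Dᶜ).toReal) :=
    (hCON h).trans
      (stmt5_con_formula μ Z hZ D hD τ hτmeas hdisj hcover h (fun j => lam (τ j)) hh)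
  have hCONh' : CON h' = (∑ q : (Fin M ⊕ Bool) × (Fin M ⊕ Bool),
      stmt5W (stmt5ext (fun j => lam (τ j)) (lam τL) (lam τR) q.1)
             (stmt5ext (fun j => lam (τ j)) (lam τL) (lam τR) q.2) *
        (stmt5ext (fun j => (μ (D ∩ Z ⁻¹' τ j)).toReal)
            ((μ (D ∩ Z ⁻¹' τL)).toReal) ((μ (D ∩ Z ⁻¹' τR)).toReal) q.1 *
         stmt5ext (fun j => (μ (Dᶜ ∩ Z ⁻¹' τ j)).toReal)
            ((μ (Dᶜ ∩ Z ⁻¹' τL)).toReal) ((μ (Dᶜ ∩ Z ⁻¹' τR)).toReal) q.2))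
      / ((μ D).toReal * (μ Dᶜ).toReal) := by
    refine (hCON h').trans
      ((stmt5_con_formula μ Z hZ D hD _ hσ'meas hdisj' hcover' h' _ hk').trans ?_)
    refine congrArg (fun s => s / ((μ D).toReal * (μ Dᶜ).toReal)) ?_
    exact Finset.sum_congr rfl fun q _ => by rw [haexta q.1, haextb q.2]
  -- compatibility of orderings
  have hltv : ∀ i j : Fin (M + 1), lam (τ i) < lam (τ j) ↔
      (μ (D ∩ Z ⁻¹' τ i)).toReal * (μ (Dᶜ ∩ Z ⁻¹' τ j)).toReal
        < (μ (D ∩ Z ⁻¹' τ j)).toReal * (μ (Dᶜ ∩ Z ⁻¹' τ i)).toReal := by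
    intro i j
    rw [hlamτ i, hlamτ j]
    exact stmt5_ratio_lt (hpa i) (hpb i) (hpa j) (hpb j)
  have heqv : ∀ i j : Fin (M + 1), lam (τ i) = lam (τ j) ↔
      (μ (D ∩ Z ⁻¹' τ i)).toReal * (μ (Dᶜ ∩ Z ⁻¹' τ j)).toReal
        = (μ (D ∩ Z ⁻¹' τ j)).toReal * (μ (Dᶜ ∩ Z ⁻¹' τ i)).toReal := by
    intro i j
    rw [hlamτ i, hlamτ j]
    exact stmt5_ratio_eq (hpa i) (hpb i) (hpa j) (hpb j)
  have hpaE : ∀ i, 0 < stmt5ext (fun j => (μ (D ∩ Z ⁻¹' τ j)).toReal)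
      ((μ (D ∩ Z ⁻¹' τL)).toReal) ((μ (D ∩ Z ⁻¹' τR)).toReal) i := by
    intro i
    match i with
    | .inl j => exact hpa j.succ
    | .inr false => exact hpaL
    | .inr true => exact hpaR
  have hpbE : ∀ i, 0 < stmt5ext (fun j => (μ (Dᶜ ∩ Z ⁻¹' τ j)).toReal)
      ((μ (Dᶜ ∩ Z ⁻¹' τL)).toReal) ((μ (Dᶜ ∩ Z ⁻¹' τR)).toReal) i := by
    intro i
    match i with
    | .inl j => exact hpb j.succ
    | .inr false => exact hpbL
    | .inr true => exact hpbR
  have hlamE : ∀ i, stmt5ext (fun j => lam (τ j)) (lam τL) (lam τR) i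
      = stmt5ext (fun j => (μ (D ∩ Z ⁻¹' τ j)).toReal)
          ((μ (D ∩ Z ⁻¹' τL)).toReal) ((μ (D ∩ Z ⁻¹' τR)).toReal) i
        / (stmt5ext (fun j => (μ (D ∩ Z ⁻¹' τ j)).toReal)
            ((μ (D ∩ Z ⁻¹' τL)).toReal) ((μ (D ∩ Z ⁻¹' τR)).toReal) i
          + stmt5ext (fun j => (μ (Dᶜ ∩ Z ⁻¹' τ j)).toReal)
            ((μ (Dᶜ ∩ Z ⁻¹' τL)).toReal) ((μ (Dᶜ ∩ Z ⁻¹' τR)).toReal) i) := by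
    intro i
    match i with
    | .inl j => exact hlamτ j.succ
    | .inr false => exact hlamL
    | .inr true => exact hlamR
  have hltv' : ∀ i j : Fin M ⊕ Bool,
      stmt5ext (fun j => lam (τ j)) (lam τL) (lam τR) i
        < stmt5ext (fun j => lam (τ j)) (lam τL) (lam τR) j ↔
      stmt5ext (fun j => (μ (D ∩ Z ⁻¹' τ j)).toReal)
          ((μ (D ∩ Z ⁻¹' τL)).toReal) ((μ (D ∩ Z ⁻¹' τR)).toReal) i *
        stmt5ext (fun j => (μ (Dᶜ ∩ Z ⁻¹' τ j)).toReal)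
          ((μ (Dᶜ ∩ Z ⁻¹' τL)).toReal) ((μ (Dᶜ ∩ Z ⁻¹' τR)).toReal) j
      < stmt5ext (fun j => (μ (D ∩ Z ⁻¹' τ j)).toReal)
          ((μ (D ∩ Z ⁻¹' τL)).toReal) ((μ (D ∩ Z ⁻¹' τR)).toReal) j *
        stmt5ext (fun j => (μ (Dᶜ ∩ Z ⁻¹' τ j)).toReal)
          ((μ (Dᶜ ∩ Z ⁻¹' τL)).toReal) ((μ (Dᶜ ∩ Z ⁻¹' τR)).toReal) i := by
    intro i j
    rw [hlamE i, hlamE j]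
    exact stmt5_ratio_lt (hpaE i) (hpbE i) (hpaE j) (hpbE j)
  have heqv' : ∀ i j : Fin M ⊕ Bool,
      stmt5ext (fun j => lam (τ j)) (lam τL) (lam τR) i
        = stmt5ext (fun j => lam (τ j)) (lam τL) (lam τR) j ↔
      stmt5ext (fun j => (μ (D ∩ Z ⁻¹' τ j)).toReal)
          ((μ (D ∩ Z ⁻¹' τL)).toReal) ((μ (D ∩ Z ⁻¹' τR)).toReal) i *
        stmt5ext (fun j => (μ (Dᶜ ∩ Z ⁻¹' τ j)).toReal)
          ((μ (Dᶜ ∩ Z ⁻¹' τL)).toReal) ((μ (Dᶜ ∩ Z ⁻¹' τR)).toReal) j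
      = stmt5ext (fun j => (μ (D ∩ Z ⁻¹' τ j)).toReal)
          ((μ (D ∩ Z ⁻¹' τL)).toReal) ((μ (D ∩ Z ⁻¹' τR)).toReal) j *
        stmt5ext (fun j => (μ (Dᶜ ∩ Z ⁻¹' τ j)).toReal)
          ((μ (Dᶜ ∩ Z ⁻¹' τL)).toReal) ((μ (Dᶜ ∩ Z ⁻¹' τR)).toReal) i := by
    intro i j
    rw [hlamE i, hlamE j]
    exact stmt5_ratio_eq (hpaE i) (hpbE i) (hpaE j) (hpbE j)
  -- W-sums as max-sums
  have hW : (∑ q : Fin (M + 1) × Fin (M + 1),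
      stmt5W (lam (τ q.1)) (lam (τ q.2)) *
        ((μ (D ∩ Z ⁻¹' τ q.1)).toReal * (μ (Dᶜ ∩ Z ⁻¹' τ q.2)).toReal))
      = (1/2) * ∑ q : Fin (M + 1) × Fin (M + 1),
        max ((μ (D ∩ Z ⁻¹' τ q.1)).toReal * (μ (Dᶜ ∩ Z ⁻¹' τ q.2)).toReal)
            ((μ (D ∩ Z ⁻¹' τ q.2)).toReal * (μ (Dᶜ ∩ Z ⁻¹' τ q.1)).toReal) :=
    stmt5_wsum _ _ _ hltv heqv
  have hW' : (∑ q : (Fin M ⊕ Bool) × (Fin M ⊕ Bool),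
      stmt5W (stmt5ext (fun j => lam (τ j)) (lam τL) (lam τR) q.1)
             (stmt5ext (fun j => lam (τ j)) (lam τL) (lam τR) q.2) *
        (stmt5ext (fun j => (μ (D ∩ Z ⁻¹' τ j)).toReal)
            ((μ (D ∩ Z ⁻¹' τL)).toReal) ((μ (D ∩ Z ⁻¹' τR)).toReal) q.1 *
         stmt5ext (fun j => (μ (Dᶜ ∩ Z ⁻¹' τ j)).toReal)
            ((μ (Dᶜ ∩ Z ⁻¹' τL)).toReal) ((μ (Dᶜ ∩ Z ⁻¹' τR)).toReal) q.2))
      = (1/2) * ∑ q : (Fin M ⊕ Bool) × (Fin M ⊕ Bool),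
        max (stmt5ext (fun j => (μ (D ∩ Z ⁻¹' τ j)).toReal)
              ((μ (D ∩ Z ⁻¹' τL)).toReal) ((μ (D ∩ Z ⁻¹' τR)).toReal) q.1 *
             stmt5ext (fun j => (μ (Dᶜ ∩ Z ⁻¹' τ j)).toReal)
              ((μ (Dᶜ ∩ Z ⁻¹' τL)).toReal) ((μ (Dᶜ ∩ Z ⁻¹' τR)).toReal) q.2)
            (stmt5ext (fun j => (μ (D ∩ Z ⁻¹' τ j)).toReal)
              ((μ (D ∩ Z ⁻¹' τL)).toReal) ((μ (D ∩ Z ⁻¹' τR)).toReal) q.2 *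
             stmt5ext (fun j => (μ (Dᶜ ∩ Z ⁻¹' τ j)).toReal)
              ((μ (Dᶜ ∩ Z ⁻¹' τL)).toReal) ((μ (Dᶜ ∩ Z ⁻¹' τR)).toReal) q.1) :=
    stmt5_wsum _ _ _ hltv' heqv'
  -- max-sums via abs-sums
  have hM : (∑ q : Fin (M + 1) × Fin (M + 1),
      max ((μ (D ∩ Z ⁻¹' τ q.1)).toReal * (μ (Dᶜ ∩ Z ⁻¹' τ q.2)).toReal)
          ((μ (D ∩ Z ⁻¹' τ q.2)).toReal * (μ (Dᶜ ∩ Z ⁻¹' τ q.1)).toReal))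
      = (∑ i, (μ (D ∩ Z ⁻¹' τ i)).toReal) * (∑ i, (μ (Dᶜ ∩ Z ⁻¹' τ i)).toReal)
        + (1/2) * ∑ q : Fin (M + 1) × Fin (M + 1),
          |(μ (D ∩ Z ⁻¹' τ q.1)).toReal * (μ (Dᶜ ∩ Z ⁻¹' τ q.2)).toReal
            - (μ (D ∩ Z ⁻¹' τ q.2)).toReal * (μ (Dᶜ ∩ Z ⁻¹' τ q.1)).toReal| :=
    stmt5_max_sum (fun j => (μ (D ∩ Z ⁻¹' τ j)).toReal) (fun j => (μ (Dᶜ ∩ Z ⁻¹' τ j)).toReal)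
  have hM' : (∑ q : (Fin M ⊕ Bool) × (Fin M ⊕ Bool),
      max (stmt5ext (fun j => (μ (D ∩ Z ⁻¹' τ j)).toReal)
            ((μ (D ∩ Z ⁻¹' τL)).toReal) ((μ (D ∩ Z ⁻¹' τR)).toReal) q.1 *
           stmt5ext (fun j => (μ (Dᶜ ∩ Z ⁻¹' τ j)).toReal)
            ((μ (Dᶜ ∩ Z ⁻¹' τL)).toReal) ((μ (Dᶜ ∩ Z ⁻¹' τR)).toReal) q.2)
          (stmt5ext (fun j => (μ (D ∩ Z ⁻¹' τ j)).toReal)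
            ((μ (D ∩ Z ⁻¹' τL)).toReal) ((μ (D ∩ Z ⁻¹' τR)).toReal) q.2 *
           stmt5ext (fun j => (μ (Dᶜ ∩ Z ⁻¹' τ j)).toReal)
            ((μ (Dᶜ ∩ Z ⁻¹' τL)).toReal) ((μ (Dᶜ ∩ Z ⁻¹' τR)).toReal) q.1))
      = (∑ i, stmt5ext (fun j => (μ (D ∩ Z ⁻¹' τ j)).toReal)
            ((μ (D ∩ Z ⁻¹' τL)).toReal) ((μ (D ∩ Z ⁻¹' τR)).toReal) i)
        * (∑ i, stmt5ext (fun j => (μ (Dᶜ ∩ Z ⁻¹' τ j)).toReal)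
            ((μ (Dᶜ ∩ Z ⁻¹' τL)).toReal) ((μ (Dᶜ ∩ Z ⁻¹' τR)).toReal) i)
        + (1/2) * ∑ q : (Fin M ⊕ Bool) × (Fin M ⊕ Bool),
          |stmt5ext (fun j => (μ (D ∩ Z ⁻¹' τ j)).toReal)
              ((μ (D ∩ Z ⁻¹' τL)).toReal) ((μ (D ∩ Z ⁻¹' τR)).toReal) q.1 *
            stmt5ext (fun j => (μ (Dᶜ ∩ Z ⁻¹' τ j)).toReal)
              ((μ (Dᶜ ∩ Z ⁻¹' τL)).toReal) ((μ (Dᶜ ∩ Z ⁻¹' τR)).toReal) q.2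
            - stmt5ext (fun j => (μ (D ∩ Z ⁻¹' τ j)).toReal)
              ((μ (D ∩ Z ⁻¹' τL)).toReal) ((μ (D ∩ Z ⁻¹' τR)).toReal) q.2 *
            stmt5ext (fun j => (μ (Dᶜ ∩ Z ⁻¹' τ j)).toReal)
              ((μ (Dᶜ ∩ Z ⁻¹' τL)).toReal) ((μ (Dᶜ ∩ Z ⁻¹' τR)).toReal) q.1| :=
    stmt5_max_sum (stmt5ext (fun j => (μ (D ∩ Z ⁻¹' τ j)).toReal)
        ((μ (D ∩ Z ⁻¹' τL)).toReal) ((μ (D ∩ Z ⁻¹' τR)).toReal)) (stmt5ext (fun j => (μ (Dᶜ ∩ Z ⁻¹' τ j)).toReal)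
        ((μ (Dᶜ ∩ Z ⁻¹' τL)).toReal) ((μ (Dᶜ ∩ Z ⁻¹' τR)).toReal))
  have hPP : (∑ i, stmt5ext (fun j => (μ (D ∩ Z ⁻¹' τ j)).toReal)
            ((μ (D ∩ Z ⁻¹' τL)).toReal) ((μ (D ∩ Z ⁻¹' τR)).toReal) i)
        * (∑ i, stmt5ext (fun j => (μ (Dᶜ ∩ Z ⁻¹' τ j)).toReal)
            ((μ (Dᶜ ∩ Z ⁻¹' τL)).toReal) ((μ (Dᶜ ∩ Z ⁻¹' τR)).toReal) i)
      = (∑ i, (μ (D ∩ Z ⁻¹' τ i)).toReal) * (∑ i, (μ (Dᶜ ∩ Z ⁻¹' τ i)).toReal) := by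
    rw [stmt5ext_sum _ _ _ ha0, stmt5ext_sum _ _ _ hb0]
  -- core inequality
  have hcore : (∑ q : Fin (M + 1) × Fin (M + 1),
        |(μ (D ∩ Z ⁻¹' τ q.1)).toReal * (μ (Dᶜ ∩ Z ⁻¹' τ q.2)).toReal
          - (μ (D ∩ Z ⁻¹' τ q.2)).toReal * (μ (Dᶜ ∩ Z ⁻¹' τ q.1)).toReal|)
      + 2 * |(μ (D ∩ Z ⁻¹' τL)).toReal * (μ (Dᶜ ∩ Z ⁻¹' τR)).toReal
          - (μ (D ∩ Z ⁻¹' τR)).toReal * (μ (Dᶜ ∩ Z ⁻¹' τL)).toReal|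
      ≤ ∑ q : (Fin M ⊕ Bool) × (Fin M ⊕ Bool),
          |stmt5ext (fun j => (μ (D ∩ Z ⁻¹' τ j)).toReal)
              ((μ (D ∩ Z ⁻¹' τL)).toReal) ((μ (D ∩ Z ⁻¹' τR)).toReal) q.1 *
            stmt5ext (fun j => (μ (Dᶜ ∩ Z ⁻¹' τ j)).toReal)
              ((μ (Dᶜ ∩ Z ⁻¹' τL)).toReal) ((μ (Dᶜ ∩ Z ⁻¹' τR)).toReal) q.2
            - stmt5ext (fun j => (μ (D ∩ Z ⁻¹' τ j)).toReal)
              ((μ (D ∩ Z ⁻¹' τL)).toReal) ((μ (D ∩ Z ⁻¹' τR)).toReal) q.2 *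
            stmt5ext (fun j => (μ (Dᶜ ∩ Z ⁻¹' τ j)).toReal)
              ((μ (Dᶜ ∩ Z ⁻¹' τL)).toReal) ((μ (Dᶜ ∩ Z ⁻¹' τR)).toReal) q.1| :=
    stmt5_core (fun j => (μ (D ∩ Z ⁻¹' τ j)).toReal) (fun j => (μ (Dᶜ ∩ Z ⁻¹' τ j)).toReal)
      ((μ (D ∩ Z ⁻¹' τL)).toReal) ((μ (D ∩ Z ⁻¹' τR)).toReal)
      ((μ (Dᶜ ∩ Z ⁻¹' τL)).toReal) ((μ (Dᶜ ∩ Z ⁻¹' τR)).toReal) ha0 hb0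
  set dd : ℝ := |(μ (D ∩ Z ⁻¹' τL)).toReal * (μ (Dᶜ ∩ Z ⁻¹' τR)).toReal
      - (μ (D ∩ Z ⁻¹' τR)).toReal * (μ (Dᶜ ∩ Z ⁻¹' τL)).toReal| with hdd_def
  have hkey : (∑ q : Fin (M + 1) × Fin (M + 1),
      stmt5W (lam (τ q.1)) (lam (τ q.2)) *
        ((μ (D ∩ Z ⁻¹' τ q.1)).toReal * (μ (Dᶜ ∩ Z ⁻¹' τ q.2)).toReal))
      + (1/2) * dd
      ≤ ∑ q : (Fin M ⊕ Bool) × (Fin M ⊕ Bool),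
      stmt5W (stmt5ext (fun j => lam (τ j)) (lam τL) (lam τR) q.1)
             (stmt5ext (fun j => lam (τ j)) (lam τL) (lam τR) q.2) *
        (stmt5ext (fun j => (μ (D ∩ Z ⁻¹' τ j)).toReal)
            ((μ (D ∩ Z ⁻¹' τL)).toReal) ((μ (D ∩ Z ⁻¹' τR)).toReal) q.1 *
         stmt5ext (fun j => (μ (Dᶜ ∩ Z ⁻¹' τ j)).toReal)
            ((μ (Dᶜ ∩ Z ⁻¹' τL)).toReal) ((μ (Dᶜ ∩ Z ⁻¹' τR)).toReal) q.2) := by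
    linarith [hW, hW', hM, hM', hPP, hcore]
  have hddnn : 0 ≤ dd := abs_nonneg _
  have CORE_EQ : (μ (D ∩ Z ⁻¹' τL)).toReal * (μ (Dᶜ ∩ Z ⁻¹' τR)).toReal
        = (μ (D ∩ Z ⁻¹' τR)).toReal * (μ (Dᶜ ∩ Z ⁻¹' τL)).toReal →
      (∑ q : (Fin M ⊕ Bool) × (Fin M ⊕ Bool),
          |stmt5ext (fun j => (μ (D ∩ Z ⁻¹' τ j)).toReal)
              ((μ (D ∩ Z ⁻¹' τL)).toReal) ((μ (D ∩ Z ⁻¹' τR)).toReal) q.1 *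
            stmt5ext (fun j => (μ (Dᶜ ∩ Z ⁻¹' τ j)).toReal)
              ((μ (Dᶜ ∩ Z ⁻¹' τL)).toReal) ((μ (Dᶜ ∩ Z ⁻¹' τR)).toReal) q.2
            - stmt5ext (fun j => (μ (D ∩ Z ⁻¹' τ j)).toReal)
              ((μ (D ∩ Z ⁻¹' τL)).toReal) ((μ (D ∩ Z ⁻¹' τR)).toReal) q.2 *
            stmt5ext (fun j => (μ (Dᶜ ∩ Z ⁻¹' τ j)).toReal)
              ((μ (Dᶜ ∩ Z ⁻¹' τL)).toReal) ((μ (Dᶜ ∩ Z ⁻¹' τR)).toReal) q.1|)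
      = ∑ q : Fin (M + 1) × Fin (M + 1),
        |(μ (D ∩ Z ⁻¹' τ q.1)).toReal * (μ (Dᶜ ∩ Z ⁻¹' τ q.2)).toReal
          - (μ (D ∩ Z ⁻¹' τ q.2)).toReal * (μ (Dᶜ ∩ Z ⁻¹' τ q.1)).toReal| := fun hd =>
    stmt5_core_eq (fun j => (μ (D ∩ Z ⁻¹' τ j)).toReal) (fun j => (μ (Dᶜ ∩ Z ⁻¹' τ j)).toReal)
      ((μ (D ∩ Z ⁻¹' τL)).toReal) ((μ (D ∩ Z ⁻¹' τR)).toReal)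
      ((μ (Dᶜ ∩ Z ⁻¹' τL)).toReal) ((μ (Dᶜ ∩ Z ⁻¹' τR)).toReal)
      hpaL hpbL hpaR ha0 hb0 hd
  refine ⟨?_, ?_, ?_⟩
  · rw [hCONh, hCONh']
    exact (div_le_div_iff_of_pos_right hABpos).mpr (by linarith [hkey, hddnn])
  · intro hEq
    rw [hCONh', hCONh, div_eq_div_iff hABne hABne] at hEq
    have hSweq := mul_right_cancel₀ hABne hEq
    have hdd0 : dd = 0 := le_antisymm (by linarith [hkey, hSweq]) hddnn
    rw [hdd_def] at hdd0
    have hd : (μ (D ∩ Z ⁻¹' τL)).toReal * (μ (Dᶜ ∩ Z ⁻¹' τR)).toReal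
        = (μ (D ∩ Z ⁻¹' τR)).toReal * (μ (Dᶜ ∩ Z ⁻¹' τL)).toReal :=
      sub_eq_zero.mp (abs_eq_zero.mp hdd0)
    refine ⟨?_, ?_⟩
    · rw [hlamL, hlamτ 0, ha0, hb0]
      exact (stmt5_ratio_eq hpaL hpbL (by linarith) (by linarith)).mpr (by linear_combination hd)
    · rw [hlamR, hlamτ 0, ha0, hb0]
      exact (stmt5_ratio_eq hpaR hpbR (by linarith) (by linarith)).mpr
        (by linear_combination -hd)
  · rintro ⟨h1, h2⟩
    rw [hlamL, hlamτ 0, ha0, hb0] at h1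
    have hd : (μ (D ∩ Z ⁻¹' τL)).toReal * (μ (Dᶜ ∩ Z ⁻¹' τR)).toReal
        = (μ (D ∩ Z ⁻¹' τR)).toReal * (μ (Dᶜ ∩ Z ⁻¹' τL)).toReal := by
      have hx := (stmt5_ratio_eq hpaL hpbL (by linarith) (by linarith)).mp h1
      linear_combination hx
    have hEqAbs := CORE_EQ hd
    have hSweq : (∑ q : (Fin M ⊕ Bool) × (Fin M ⊕ Bool),
      stmt5W (stmt5ext (fun j => lam (τ j)) (lam τL) (lam τR) q.1)
             (stmt5ext (fun j => lam (τ j)) (lam τL) (lam τR) q.2) *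
        (stmt5ext (fun j => (μ (D ∩ Z ⁻¹' τ j)).toReal)
            ((μ (D ∩ Z ⁻¹' τL)).toReal) ((μ (D ∩ Z ⁻¹' τR)).toReal) q.1 *
         stmt5ext (fun j => (μ (Dᶜ ∩ Z ⁻¹' τ j)).toReal)
            ((μ (Dᶜ ∩ Z ⁻¹' τL)).toReal) ((μ (Dᶜ ∩ Z ⁻¹' τR)).toReal) q.2))
        = ∑ q : Fin (M + 1) × Fin (M + 1),
      stmt5W (lam (τ q.1)) (lam (τ q.2)) *
        ((μ (D ∩ Z ⁻¹' τ q.1)).toReal * (μ (Dᶜ ∩ Z ⁻¹' τ q.2)).toReal) := by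
      linarith [hW, hW', hM, hM', hPP, hEqAbs]
    rw [hCONh', hCONh, hSweq]
end

section
/- Consider a single parent node τ split into children τᴸ and τᴿ. Define f(τ) = P(D=1, Z∈τ) and S(τ) = P(D=0, Z∈τ) with f(τ), S(τ) > 0. Before splitting, the within-node concordance is 1/2; after splitting it equals 1/2 + (1/2)|f(τᴸ)S(τᴿ) − f(τᴿ)S(τᴸ)| / (f(τ)S(τ)). In particular the within-node concordance strictly increases iff f(τᴸ)/S(τᴸ) ≠ f(τᴿ)/S(τᴿ). -/
open MeasureTheory ProbabilityTheory Filter Set Topology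

/-- For a parent node `τ` split into children `τᴸ, τᴿ`, with
`f(A) = P(D=1, Z ∈ A)` and `S(A) = P(D=0, Z ∈ A)` all positive, the within-node
concordance of a constant marker is `1/2`, the within-node concordance of the split
marker (ranked consistently with the case-control ratios of the children) is
`1/2 + (1/2)|f(τᴸ)S(τᴿ) − f(τᴿ)S(τᴸ)|/(f(τ)S(τ))`, and it strictly exceeds `1/2`
iff `f(τᴸ)/S(τᴸ) ≠ f(τᴿ)/S(τᴿ)`. -/
theorem stmt6 {Ω E : Type*} [MeasurableSpace Ω] [MeasurableSpace E]
    (μ : Measure Ω) [IsProbabilityMeasure μ]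
    (Z : Ω → E) (hZ : Measurable Z)
    (D : Set Ω) (hD : MeasurableSet D)
    (τ τL τR : Set E) (hLR : τL ∪ τR = τ) (hdLR : Disjoint τL τR)
    (hτL : MeasurableSet τL) (hτR : MeasurableSet τR)
    (f S : Set E → ℝ)
    (hf : ∀ A : Set E, f A = (μ (D ∩ Z ⁻¹' A)).toReal)
    (hS : ∀ A : Set E, S A = (μ (Dᶜ ∩ Z ⁻¹' A)).toReal)
    (hpos : 0 < f τL ∧ 0 < f τR ∧ 0 < S τL ∧ 0 < S τR)
    -- within-node concordance of a marker k: both subjects conditioned to lie in τ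
    (CONw : (E → ℝ) → ℝ)
    (hCONw : ∀ k : E → ℝ, CONw k =
      ((μ.prod μ)[|(D ∩ Z ⁻¹' τ) ×ˢ (Dᶜ ∩ Z ⁻¹' τ)] {p | k (Z p.1) > k (Z p.2)}).toReal
      + (1/2) *
        ((μ.prod μ)[|(D ∩ Z ⁻¹' τ) ×ˢ (Dᶜ ∩ Z ⁻¹' τ)] {p | k (Z p.1) = k (Z p.2)}).toReal)
    -- before splitting: a marker constant on τ
    (gb : E → ℝ) (hgb : ∃ a : ℝ, ∀ z ∈ τ, gb z = a)
    -- after splitting: a marker constant on each child, ranked by case-control ratio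
    (ga : E → ℝ) (aL aR : ℝ)
    (hgaL : ∀ z ∈ τL, ga z = aL) (hgaR : ∀ z ∈ τR, ga z = aR)
    (hrank : (aR < aL ↔ f τR / S τR < f τL / S τL) ∧ (aL = aR ↔ f τL / S τL = f τR / S τR)) :
    CONw gb = 1/2 ∧
    CONw ga = 1/2 + |f τL * S τR - f τR * S τL| / (2 * f τ * S τ) ∧
    (CONw gb < CONw ga ↔ f τL / S τL ≠ f τR / S τR) := by
  obtain ⟨hfL, hfR, hSL, hSR⟩ := hpos
  have hpre : Z ⁻¹' τ = Z ⁻¹' τL ∪ Z ⁻¹' τR := by rw [← hLR]; rfl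
  have hdis : Disjoint (Z ⁻¹' τL) (Z ⁻¹' τR) := hdLR.preimage Z
  -- splitting of f and S
  have hfsplit : f τ = f τL + f τR := by
    rw [hf, hf, hf, hpre, Set.inter_union_distrib_left,
      measure_union (hdis.mono Set.inter_subset_right Set.inter_subset_right) (hD.inter (hZ hτR)),
      ENNReal.toReal_add (measure_ne_top μ _) (measure_ne_top μ _)]
  have hSsplit : S τ = S τL + S τR := by
    rw [hS, hS, hS, hpre, Set.inter_union_distrib_left,
      measure_union (hdis.mono Set.inter_subset_right Set.inter_subset_right) (hD.compl.inter (hZ hτR)),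
      ENNReal.toReal_add (measure_ne_top μ _) (measure_ne_top μ _)]
  have hfτ : 0 < f τ := by rw [hfsplit]; linarith
  have hSτ : 0 < S τ := by rw [hSsplit]; linarith
  set A := D ∩ Z ⁻¹' τ with hAdef
  set B := Dᶜ ∩ Z ⁻¹' τ with hBdef
  have hA : MeasurableSet A := hD.inter (hZ (by rw [← hLR]; exact hτL.union hτR))
  have hB : MeasurableSet B := hD.compl.inter (hZ (by rw [← hLR]; exact hτL.union hτR))
  have hAB : (μ.prod μ) (A ×ˢ B) = μ A * μ B := Measure.prod_prod A B
  have hABr : ((μ.prod μ) (A ×ˢ B)).toReal = f τ * S τ := by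
    rw [hAB, ENNReal.toReal_mul, hf, hS]
  have hcond : ∀ t : Set (Ω × Ω),
      (((μ.prod μ)[|A ×ˢ B]) t).toReal = ((μ.prod μ) ((A ×ˢ B) ∩ t)).toReal / (f τ * S τ) := by
    intro t
    rw [ProbabilityTheory.cond_apply (hA.prod hB), ENNReal.toReal_mul, ENNReal.toReal_inv,
      hABr, inv_mul_eq_div]
  -- concordance of a constant marker is 1/2
  have hconst : ∀ (g : E → ℝ) (a : ℝ), (∀ z ∈ τ, g z = a) → CONw g = 1/2 := by
    intro g a hg
    have h1 : (A ×ˢ B) ∩ {p : Ω × Ω | g (Z p.1) > g (Z p.2)} = ∅ := by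
      ext ⟨x, y⟩
      simp only [Set.mem_inter_iff, Set.mem_prod, Set.mem_setOf_eq, Set.mem_empty_iff_false,
        iff_false, not_and]
      rintro ⟨⟨-, hx⟩, -, hy⟩
      rw [hg _ hx, hg _ hy]
      exact lt_irrefl a
    have h2 : (A ×ˢ B) ∩ {p : Ω × Ω | g (Z p.1) = g (Z p.2)} = A ×ˢ B := by
      refine Set.inter_eq_self_of_subset_left ?_
      rintro ⟨x, y⟩ ⟨⟨-, hx⟩, -, hy⟩
      simp only [Set.mem_setOf_eq]
      rw [hg _ hx, hg _ hy]
    rw [hCONw, hcond, hcond, h1, h2, hABr]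
    have hne0 : f τ * S τ ≠ 0 := by positivity
    simp [measure_empty, div_self hne0]
  have hgb12 : CONw gb = 1/2 := by
    obtain ⟨a, ha⟩ := hgb
    exact hconst gb a ha
  -- the after-split concordance value
  have hdiv : f τL / S τL = f τR / S τR ↔ f τL * S τR = f τR * S τL :=
    div_eq_div_iff hSL.ne' hSR.ne'
  have hga : CONw ga = 1/2 + |f τL * S τR - f τR * S τL| / (2 * f τ * S τ) := by
    rcases lt_trichotomy aL aR with hlt | heq | hgt
    · -- aL < aR : f τL * S τR < f τR * S τL
      have hne : f τL / S τL ≠ f τR / S τR := fun h => absurd (hrank.2.mpr h) hlt.ne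
      have hnlt : ¬ f τR / S τR < f τL / S τL := fun h => absurd (hrank.1.mpr h) (asymm hlt)
      have hratio : f τL / S τL < f τR / S τR := lt_of_le_of_ne (not_lt.mp hnlt) hne
      have hmul : f τL * S τR < f τR * S τL := by
        rwa [div_lt_div_iff₀ hSL hSR] at hratio
      have h1 : (A ×ˢ B) ∩ {p : Ω × Ω | ga (Z p.1) > ga (Z p.2)} =
          (D ∩ Z ⁻¹' τR) ×ˢ (Dᶜ ∩ Z ⁻¹' τL) := by
        ext ⟨x, y⟩
        simp only [Set.mem_inter_iff, Set.mem_prod, Set.mem_setOf_eq, Set.mem_preimage]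
        constructor
        · rintro ⟨⟨⟨hxD, hx⟩, hyD, hy⟩, hgt⟩
          rw [← hLR] at hx hy
          rcases hx with hx | hx <;> rcases hy with hy | hy
          · rw [hgaL _ hx, hgaL _ hy] at hgt; exact absurd hgt (lt_irrefl _)
          · rw [hgaL _ hx, hgaR _ hy] at hgt; exact absurd hgt (asymm hlt)
          · exact ⟨⟨hxD, hx⟩, hyD, hy⟩
          · rw [hgaR _ hx, hgaR _ hy] at hgt; exact absurd hgt (lt_irrefl _)
        · rintro ⟨⟨hxD, hx⟩, hyD, hy⟩
          refine ⟨⟨⟨hxD, ?_⟩, hyD, ?_⟩, ?_⟩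
          · rw [← hLR]; exact Or.inr hx
          · rw [← hLR]; exact Or.inl hy
          · rw [hgaR _ hx, hgaL _ hy]; exact hlt
      have h2 : (A ×ˢ B) ∩ {p : Ω × Ω | ga (Z p.1) = ga (Z p.2)} =
          ((D ∩ Z ⁻¹' τL) ×ˢ (Dᶜ ∩ Z ⁻¹' τL)) ∪ ((D ∩ Z ⁻¹' τR) ×ˢ (Dᶜ ∩ Z ⁻¹' τR)) := by
        ext ⟨x, y⟩
        simp only [Set.mem_inter_iff, Set.mem_prod, Set.mem_setOf_eq, Set.mem_preimage,
          Set.mem_union]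
        constructor
        · rintro ⟨⟨⟨hxD, hx⟩, hyD, hy⟩, heq2⟩
          rw [← hLR] at hx hy
          rcases hx with hx | hx <;> rcases hy with hy | hy
          · exact Or.inl ⟨⟨hxD, hx⟩, hyD, hy⟩
          · rw [hgaL _ hx, hgaR _ hy] at heq2; exact absurd heq2 hlt.ne
          · rw [hgaR _ hx, hgaL _ hy] at heq2; exact absurd heq2.symm hlt.ne
          · exact Or.inr ⟨⟨hxD, hx⟩, hyD, hy⟩
        · rintro (⟨⟨hxD, hx⟩, hyD, hy⟩ | ⟨⟨hxD, hx⟩, hyD, hy⟩)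
          · refine ⟨⟨⟨hxD, by rw [← hLR]; exact Or.inl hx⟩, hyD, by rw [← hLR]; exact Or.inl hy⟩, ?_⟩
            rw [hgaL _ hx, hgaL _ hy]
          · refine ⟨⟨⟨hxD, by rw [← hLR]; exact Or.inr hx⟩, hyD, by rw [← hLR]; exact Or.inr hy⟩, ?_⟩
            rw [hgaR _ hx, hgaR _ hy]
      have hprodd : Disjoint ((D ∩ Z ⁻¹' τL) ×ˢ (Dᶜ ∩ Z ⁻¹' τL))
          ((D ∩ Z ⁻¹' τR) ×ˢ (Dᶜ ∩ Z ⁻¹' τR)) := by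
        rw [Set.disjoint_left]
        rintro ⟨x, y⟩ ⟨⟨-, hx⟩, -⟩ ⟨⟨-, hx'⟩, -⟩
        exact (Set.disjoint_left.mp hdis) hx hx'
      have hm2 : ((μ.prod μ) (((D ∩ Z ⁻¹' τL) ×ˢ (Dᶜ ∩ Z ⁻¹' τL)) ∪
          ((D ∩ Z ⁻¹' τR) ×ˢ (Dᶜ ∩ Z ⁻¹' τR)))).toReal
          = f τL * S τL + f τR * S τR := by
        rw [measure_union hprodd ((hD.inter (hZ hτR)).prod (hD.compl.inter (hZ hτR))),
          ENNReal.toReal_add (measure_ne_top _ _) (measure_ne_top _ _),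
          Measure.prod_prod, Measure.prod_prod, ENNReal.toReal_mul, ENNReal.toReal_mul,
          hf, hf, hS, hS]
      rw [hCONw, hcond, hcond, h1, h2, hm2, Measure.prod_prod, ENNReal.toReal_mul,
        ← hf, ← hS, hfsplit, hSsplit, abs_of_neg (by linarith)]
      have h1 : S τL + S τR ≠ 0 := by positivity
      have h2 : f τL + f τR ≠ 0 := by positivity
      field_simp
      ring
    · -- aL = aR : ga is constant on τ
      have hzero : f τL * S τR = f τR * S τL := hdiv.mp (hrank.2.mp heq)
      rw [hconst ga aL (by
        intro z hz
        rw [← hLR] at hz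
        rcases hz with hz | hz
        · exact hgaL _ hz
        · rw [hgaR _ hz, heq]), hzero]
      simp
    · -- aR < aL : f τR * S τL < f τL * S τR
      have hratio : f τR / S τR < f τL / S τL := hrank.1.mp hgt
      have hmul : f τR * S τL < f τL * S τR := by
        rwa [div_lt_div_iff₀ hSR hSL] at hratio
      have h1 : (A ×ˢ B) ∩ {p : Ω × Ω | ga (Z p.1) > ga (Z p.2)} =
          (D ∩ Z ⁻¹' τL) ×ˢ (Dᶜ ∩ Z ⁻¹' τR) := by
        ext ⟨x, y⟩
        simp only [Set.mem_inter_iff, Set.mem_prod, Set.mem_setOf_eq, Set.mem_preimage]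
        constructor
        · rintro ⟨⟨⟨hxD, hx⟩, hyD, hy⟩, hgt'⟩
          rw [← hLR] at hx hy
          rcases hx with hx | hx <;> rcases hy with hy | hy
          · rw [hgaL _ hx, hgaL _ hy] at hgt'; exact absurd hgt' (lt_irrefl _)
          · exact ⟨⟨hxD, hx⟩, hyD, hy⟩
          · rw [hgaR _ hx, hgaL _ hy] at hgt'; exact absurd hgt' (asymm hgt)
          · rw [hgaR _ hx, hgaR _ hy] at hgt'; exact absurd hgt' (lt_irrefl _)
        · rintro ⟨⟨hxD, hx⟩, hyD, hy⟩
          refine ⟨⟨⟨hxD, ?_⟩, hyD, ?_⟩, ?_⟩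
          · rw [← hLR]; exact Or.inl hx
          · rw [← hLR]; exact Or.inr hy
          · rw [hgaL _ hx, hgaR _ hy]; exact hgt
      have h2 : (A ×ˢ B) ∩ {p : Ω × Ω | ga (Z p.1) = ga (Z p.2)} =
          ((D ∩ Z ⁻¹' τL) ×ˢ (Dᶜ ∩ Z ⁻¹' τL)) ∪ ((D ∩ Z ⁻¹' τR) ×ˢ (Dᶜ ∩ Z ⁻¹' τR)) := by
        ext ⟨x, y⟩
        simp only [Set.mem_inter_iff, Set.mem_prod, Set.mem_setOf_eq, Set.mem_preimage,
          Set.mem_union]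
        constructor
        · rintro ⟨⟨⟨hxD, hx⟩, hyD, hy⟩, heq2⟩
          rw [← hLR] at hx hy
          rcases hx with hx | hx <;> rcases hy with hy | hy
          · exact Or.inl ⟨⟨hxD, hx⟩, hyD, hy⟩
          · rw [hgaL _ hx, hgaR _ hy] at heq2; exact absurd heq2.symm hgt.ne
          · rw [hgaR _ hx, hgaL _ hy] at heq2; exact absurd heq2 hgt.ne
          · exact Or.inr ⟨⟨hxD, hx⟩, hyD, hy⟩
        · rintro (⟨⟨hxD, hx⟩, hyD, hy⟩ | ⟨⟨hxD, hx⟩, hyD, hy⟩)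
          · refine ⟨⟨⟨hxD, by rw [← hLR]; exact Or.inl hx⟩, hyD, by rw [← hLR]; exact Or.inl hy⟩, ?_⟩
            rw [hgaL _ hx, hgaL _ hy]
          · refine ⟨⟨⟨hxD, by rw [← hLR]; exact Or.inr hx⟩, hyD, by rw [← hLR]; exact Or.inr hy⟩, ?_⟩
            rw [hgaR _ hx, hgaR _ hy]
      have hprodd : Disjoint ((D ∩ Z ⁻¹' τL) ×ˢ (Dᶜ ∩ Z ⁻¹' τL))
          ((D ∩ Z ⁻¹' τR) ×ˢ (Dᶜ ∩ Z ⁻¹' τR)) := by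
        rw [Set.disjoint_left]
        rintro ⟨x, y⟩ ⟨⟨-, hx⟩, -⟩ ⟨⟨-, hx'⟩, -⟩
        exact (Set.disjoint_left.mp hdis) hx hx'
      have hm2 : ((μ.prod μ) (((D ∩ Z ⁻¹' τL) ×ˢ (Dᶜ ∩ Z ⁻¹' τL)) ∪
          ((D ∩ Z ⁻¹' τR) ×ˢ (Dᶜ ∩ Z ⁻¹' τR)))).toReal
          = f τL * S τL + f τR * S τR := by
        rw [measure_union hprodd ((hD.inter (hZ hτR)).prod (hD.compl.inter (hZ hτR))),
          ENNReal.toReal_add (measure_ne_top _ _) (measure_ne_top _ _),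
          Measure.prod_prod, Measure.prod_prod, ENNReal.toReal_mul, ENNReal.toReal_mul,
          hf, hf, hS, hS]
      rw [hCONw, hcond, hcond, h1, h2, hm2, Measure.prod_prod, ENNReal.toReal_mul,
        ← hf, ← hS, hfsplit, hSsplit, abs_of_pos (by linarith)]
      have h1 : S τL + S τR ≠ 0 := by positivity
      have h2 : f τL + f τR ≠ 0 := by positivity
      field_simp
      ring
  refine ⟨hgb12, hga, ?_⟩
  rw [hgb12, hga]
  constructor
  · intro h hcontra
    have : f τL * S τR = f τR * S τL := hdiv.mp hcontra
    rw [this] at h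
    simp at h
  · intro hne
    have habs : 0 < |f τL * S τR - f τR * S τL| := by
      rw [abs_pos, sub_ne_zero]
      exact fun h => hne (hdiv.mpr h)
    have : 0 < |f τL * S τR - f τR * S τL| / (2 * f τ * S τ) := by positivity
    linarith
end

section
/- Let T be a nonnegative random variable with continuous distribution and hazard function λ. Let (T₁, Z₁) and (T₂, Z₂) be i.i.d. copies of (T, Z) where Z(·) is a covariate process. For a scalar function g and fixed t with P(T > t) > 0 and conditional density of T at t positive, the time-dependent concordance CON_t(g) = P(g(Z₁(t)) > g(Z₂(t)) | T₁ = t, T₂ > t) + (1/2) P(g(Z₁(t)) = g(Z₂(t)) | T₁ = t, T₂ > t) satisfies CON_t(g) ≤ CON_t(λ(t | ·)), where λ(t | z) is the conditional hazard of T at t given Z(t) = z. That is, the true conditional hazard maximizes the time-dependent concordance among all scalar markers. -/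
open MeasureTheory ProbabilityTheory Filter Set Topology

noncomputable def qr (a b : ℝ) : ℝ :=
  (if b < a then 1 else 0) + (1/2) * (if a = b then 1 else 0)

lemma qr_lt {a b : ℝ} (h : a < b) : qr a b = 0 := by
  rw [qr, if_neg (by linarith), if_neg (by linarith)]; norm_num

lemma qr_eq {a b : ℝ} (h : a = b) : qr a b = 1/2 := by
  rw [qr, if_neg (by linarith), if_pos h]; norm_num

lemma qr_gt {a b : ℝ} (h : b < a) : qr a b = 1 := by
  rw [qr, if_pos h, if_neg (by linarith)]; norm_num

lemma qr_nonneg (a b : ℝ) : 0 ≤ qr a b := by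
  rcases lt_trichotomy a b with h | h | h
  · rw [qr_lt h]
  · rw [qr_eq h]; norm_num
  · rw [qr_gt h]; norm_num

lemma qr_le_one (a b : ℝ) : qr a b ≤ 1 := by
  rcases lt_trichotomy a b with h | h | h
  · rw [qr_lt h]; norm_num
  · rw [qr_eq h]; norm_num
  · rw [qr_gt h]

lemma qr_sum (a b : ℝ) : qr a b + qr b a = 1 := by
  rcases lt_trichotomy a b with h | h | h
  · rw [qr_lt h, qr_gt h]; norm_num
  · rw [qr_eq h, qr_eq h.symm]; norm_num
  · rw [qr_gt h, qr_lt h]; norm_num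

lemma stmt8_core {E : Type*} [MeasurableSpace E] (ρ : Measure E) [IsProbabilityMeasure ρ]
    (φ g lam : E → ℝ) (hφ : Measurable φ) (hg : Measurable g) (hlam : Measurable lam)
    (hmono : ∀ x y : E, lam x ≤ lam y → φ x ≤ φ y)
    (hint : Integrable (fun p : E × E => φ p.1) (ρ.prod ρ)) :
    (∫ p in {p : E × E | g p.1 > g p.2}, φ p.1 ∂(ρ.prod ρ))
      + (1/2) * ∫ p in {p : E × E | g p.1 = g p.2}, φ p.1 ∂(ρ.prod ρ)
    ≤ (∫ p in {p : E × E | lam p.1 > lam p.2}, φ p.1 ∂(ρ.prod ρ))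
      + (1/2) * ∫ p in {p : E × E | lam p.1 = lam p.2}, φ p.1 ∂(ρ.prod ρ) := by
  set π := ρ.prod ρ with hπ
  -- measurable sets
  have hAgt : ∀ h : E → ℝ, Measurable h → MeasurableSet {p : E × E | h p.1 > h p.2} :=
    fun h hh => measurableSet_lt (hh.comp measurable_snd) (hh.comp measurable_fst)
  have hAeq : ∀ h : E → ℝ, Measurable h → MeasurableSet {p : E × E | h p.1 = h p.2} :=
    fun h hh => measurableSet_eq_fun (hh.comp measurable_fst) (hh.comp measurable_snd)
  -- S functions
  set S : (E → ℝ) → (E × E → ℝ) := fun h p => qr (h p.1) (h p.2) * φ p.1 with hS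
  have hSsplit : ∀ h : E → ℝ, S h = fun p =>
      ({p : E × E | h p.1 > h p.2}).indicator (fun p => φ p.1) p
        + (1/2) * ({p : E × E | h p.1 = h p.2}).indicator (fun p => φ p.1) p := by
    intro h; funext p
    rcases lt_trichotomy (h p.1) (h p.2) with hc | hc | hc
    · simp only [hS, qr_lt hc, Set.indicator, mem_setOf_eq, not_lt.mpr hc.le, gt_iff_lt,
        asymm hc, hc.ne, if_false]
      ring
    · have hq := qr_eq hc
      simp only [hS, Set.indicator, mem_setOf_eq, gt_iff_lt, hc, lt_irrefl, if_false, if_true]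
      rw [qr_eq rfl]; ring
    · simp only [hS, qr_gt hc, Set.indicator, mem_setOf_eq, gt_iff_lt, hc, hc.ne', if_true,
        if_false]
      ring
  have hSint : ∀ h : E → ℝ, Measurable h → Integrable (S h) π := by
    intro h hh
    rw [hSsplit h]
    exact (hint.indicator (hAgt h hh)).add ((hint.indicator (hAeq h hh)).const_mul _)
  have hSintegral : ∀ h : E → ℝ, Measurable h →
      (∫ p in {p : E × E | h p.1 > h p.2}, φ p.1 ∂π)
        + (1/2) * ∫ p in {p : E × E | h p.1 = h p.2}, φ p.1 ∂π = ∫ p, S h p ∂π := by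
    intro h hh
    rw [hSsplit h, integral_add (hint.indicator (hAgt h hh))
      ((hint.indicator (hAeq h hh)).const_mul _), integral_const_mul,
      integral_indicator (hAgt h hh), integral_indicator (hAeq h hh)]
  rw [hSintegral g hg, hSintegral lam hlam]
  -- now show ∫ S g ≤ ∫ S lam via symmetrization
  set D : E × E → ℝ := fun p => S lam p - S g p with hD
  have hDint : Integrable D π := (hSint lam hlam).sub (hSint g hg)
  have hDswap_int : Integrable (fun p => D (Prod.swap p)) π := by
    have h1 : AEStronglyMeasurable D (Measure.map Prod.swap π) := by
      rw [hπ, Measure.prod_swap]; exact hDint.aestronglyMeasurable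
    have := (integrable_map_measure h1 measurable_swap.aemeasurable).mp
      (by rw [hπ, Measure.prod_swap]; exact hDint)
    exact this
  have hswap : ∫ p, D p ∂π = ∫ p, D (Prod.swap p) ∂π := by
    conv_lhs => rw [hπ, ← Measure.prod_swap]
    rw [integral_map measurable_swap.aemeasurable
      (by rw [Measure.prod_swap]; exact hDint.aestronglyMeasurable)]
  have hkey : ∀ p : E × E, 0 ≤ D p + D (Prod.swap p) := by
    rintro ⟨x, y⟩
    have hsum : ∀ h : E → ℝ, S h (x, y) + S h (y, x)
        = qr (h x) (h y) * φ x + (1 - qr (h x) (h y)) * φ y := by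
      intro h
      simp only [hS]
      rw [show qr (h y) (h x) = 1 - qr (h x) (h y) from by linarith [qr_sum (h x) (h y)]]
    have hexp : D (x, y) + D (Prod.swap (x, y))
        = (qr (lam x) (lam y) - qr (g x) (g y)) * (φ x - φ y) := by
      have h1 := hsum lam
      have h2 := hsum g
      simp only [hD, Prod.swap_prod_mk]
      linear_combination h1 - h2
    rw [hexp]
    rcases lt_trichotomy (lam x) (lam y) with hc | hc | hc
    · have h1 : φ x ≤ φ y := hmono x y hc.le
      rw [qr_lt hc]
      nlinarith [qr_nonneg (g x) (g y)]
    · have h1 : φ x = φ y := le_antisymm (hmono x y hc.le) (hmono y x hc.ge)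
      rw [h1]
      simp
    · have h1 : φ y ≤ φ x := hmono y x hc.le
      rw [qr_gt hc]
      nlinarith [qr_le_one (g x) (g y)]
  have hpos : 0 ≤ ∫ p, (D p + D (Prod.swap p)) ∂π :=
    integral_nonneg fun p => hkey p
  rw [integral_add hDint hDswap_int] at hpos
  have hDI : 0 ≤ ∫ p, D p ∂π := by linarith [hswap]
  have := integral_sub (hSint lam hlam) (hSint g hg)
  simp only [hD] at hDI
  rw [this] at hDI
  linarith

/-- Optimality of the true conditional hazard for the time-dependent
concordance.  At a fixed time `t`, cases are the survivors failing at `t` (conditioning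
on `T₁ = t` via the conditional distribution kernel `ν`) and controls are the survivors
with `T₂ > t`.  The hazard `λ(t|z)` is, up to the positive constant `f(t)/P(T ≥ t)`, the
density of the conditional law of `Z(t)` given `T = t` with respect to the conditional
law of `Z(t)` given `T ≥ t`.  Then for any scalar marker `g`,
`CON_t(g) ≤ CON_t(λ(t|·))` where ties get weight 1/2. -/
theorem stmt8 {Ω E : Type*} [MeasurableSpace Ω] [MeasurableSpace E]
    (μ : Measure Ω) [IsProbabilityMeasure μ]
    (T : Ω → ℝ) (hT : Measurable T)
    (Zt : Ω → E) (hZt : Measurable Zt)   -- Zt ω = Z(t)(ω), the covariate at time t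
    (t : ℝ) (hcont : μ {ω | T ω = t} = 0) (hsurv : 0 < μ {ω | t < T ω})
    (ν : ProbabilityTheory.Kernel ℝ E) [ProbabilityTheory.IsMarkovKernel ν]
    -- ν is the conditional law of Z(t) given T = t (disintegration of (T, Z(T)))
    (hdisint : Measure.map (fun ω => (T ω, Zt ω)) μ = Measure.compProd (Measure.map T μ) ν)
    (lam : E → ℝ) (hlam : Measurable lam) (c : ℝ) (hc : 0 < c)
    -- λ(t|·) is the conditional hazard of T at t given Z(t) = ·
    (hhaz : ν t = ((μ[|{ω | t ≤ T ω}]).map Zt).withDensity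
      (fun z => ENNReal.ofReal (c * lam z)))
    (g : E → ℝ) (hg : Measurable g) :
    (((ν t).prod ((μ[|{ω | t < T ω}]).map Zt)) {p | g p.1 > g p.2}).toReal
      + (1/2) * (((ν t).prod ((μ[|{ω | t < T ω}]).map Zt)) {p | g p.1 = g p.2}).toReal
    ≤ (((ν t).prod ((μ[|{ω | t < T ω}]).map Zt)) {p | lam p.1 > lam p.2}).toReal
      + (1/2) * (((ν t).prod ((μ[|{ω | t < T ω}]).map Zt)) {p | lam p.1 = lam p.2}).toReal := by
  -- the two conditional measures coincide
  have hae : {ω | t ≤ T ω} =ᵐ[μ] {ω | t < T ω} := by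
    rw [MeasureTheory.ae_eq_set]
    constructor
    · refine measure_mono_null ?_ hcont
      intro ω hω
      simp only [mem_diff, mem_setOf_eq, not_lt] at hω
      exact le_antisymm hω.2 hω.1
    · refine measure_mono_null ?_ hcont
      intro ω hω
      simp only [mem_diff, mem_setOf_eq, not_le] at hω
      exact absurd hω.1.le (not_le.mpr hω.2)
  have hcondeq : μ[|{ω | t ≤ T ω}] = μ[|{ω | t < T ω}] := by
    rw [ProbabilityTheory.cond, ProbabilityTheory.cond, measure_congr hae,
      Measure.restrict_congr_set hae]
  set ρ : Measure E := (μ[|{ω | t < T ω}]).map Zt with hρ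
  haveI : IsProbabilityMeasure (μ[|{ω | t < T ω}]) :=
    ProbabilityTheory.cond_isProbabilityMeasure hsurv.ne'
  haveI : IsProbabilityMeasure ρ := Measure.isProbabilityMeasure_map hZt.aemeasurable
  set f : E → ENNReal := fun z => ENNReal.ofReal (c * lam z) with hfdef
  have hf : Measurable f := (measurable_const.mul hlam).ennreal_ofReal
  have hν : ν t = ρ.withDensity f := by rw [hhaz, hcondeq]
  set π := ρ.prod ρ with hπ
  set φ : E → ℝ := fun z => (f z).toReal with hφdef
  have hφ : Measurable φ := hf.ennreal_toReal
  -- compute the product measure as a density against π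
  have hPA : ∀ A : Set (E × E), MeasurableSet A →
      ((ν t).prod ρ) A = ∫⁻ p in A, f p.1 ∂π := by
    intro A hA
    rw [hν, Measure.prod_apply hA,
      lintegral_withDensity_eq_lintegral_mul _ hf (measurable_measure_prodMk_left hA),
      ← lintegral_indicator hA, hπ, MeasureTheory.lintegral_prod _
        (((show Measurable fun p : E × E => f p.1 from hf.comp measurable_fst).indicator hA).aemeasurable)]
    congr 1 with x
    simp only [Pi.mul_apply]
    have hptw : ∀ y, A.indicator (fun p : E × E => f p.1) (x, y)
        = (Prod.mk x ⁻¹' A).indicator (fun _ => f x) y := by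
      intro y
      by_cases h : (x, y) ∈ A <;> simp [Set.indicator, h]
    simp_rw [hptw]
    rw [lintegral_indicator (measurable_prodMk_left hA), setLIntegral_const]
  -- total mass gives integrability
  have huniv : ∫⁻ p, f p.1 ∂π = 1 := by
    have h1 := hPA univ MeasurableSet.univ
    rw [measure_univ, setLIntegral_univ] at h1
    exact h1.symm
  have hint : Integrable (fun p : E × E => φ p.1) π := by
    refine integrable_toReal_of_lintegral_ne_top (show Measurable fun p : E × E => f p.1 from hf.comp measurable_fst).aemeasurable ?_
    rw [huniv]; exact ENNReal.one_ne_top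
  have htoReal : ∀ A : Set (E × E), MeasurableSet A →
      (((ν t).prod ρ) A).toReal = ∫ p in A, φ p.1 ∂π := by
    intro A hA
    rw [hPA A hA, ← integral_toReal ((show Measurable fun p : E × E => f p.1 from hf.comp measurable_fst).aemeasurable.restrict)
      (Filter.Eventually.of_forall fun p => ENNReal.ofReal_lt_top)]
  have hAgt : ∀ h : E → ℝ, Measurable h → MeasurableSet {p : E × E | h p.1 > h p.2} :=
    fun h hh => measurableSet_lt (hh.comp measurable_snd) (hh.comp measurable_fst)
  have hAeq : ∀ h : E → ℝ, Measurable h → MeasurableSet {p : E × E | h p.1 = h p.2} :=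
    fun h hh => measurableSet_eq_fun (hh.comp measurable_fst) (hh.comp measurable_snd)
  rw [htoReal _ (hAgt g hg), htoReal _ (hAeq g hg), htoReal _ (hAgt lam hlam),
    htoReal _ (hAeq lam hlam)]
  refine stmt8_core ρ φ g lam hφ hg hlam ?_ hint
  intro x y hxy
  exact ENNReal.toReal_mono ENNReal.ofReal_ne_top
    (ENNReal.ofReal_le_ofReal (mul_le_mul_of_nonneg_left hxy hc.le))
end

section
/- Let D ∈ {0,1} and Z be a random vector, r(z) = P(D=1 | Z=z). For any measurable scalar function g, the concordance (with ties weighted 1/2) satisfies P(g(Z₁) > g(Z₂) | D₁=1, D₂=0) + (1/2)P(g(Z₁) = g(Z₂) | D₁=1, D₂=0) ≤ P(r(Z₁) > r(Z₂) | D₁=1, D₂=0) + (1/2)P(r(Z₁) = r(Z₂) | D₁=1, D₂=0), where (Z₁,D₁),(Z₂,D₂) are i.i.d. copies of (Z,D). -/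
open MeasureTheory ProbabilityTheory Filter Set Topology
open scoped ENNReal

lemma prod_withDensity_aux {α β : Type*} [MeasurableSpace α] [MeasurableSpace β]
    (μ : Measure α) (ν : Measure β) [SigmaFinite μ] [SigmaFinite ν]
    {f : α → ℝ≥0∞} {g : β → ℝ≥0∞} (hf : Measurable f) (hg : Measurable g)
    [SigmaFinite (μ.withDensity f)] [SigmaFinite (ν.withDensity g)] :
    (μ.withDensity f).prod (ν.withDensity g)
      = (μ.prod ν).withDensity (fun p => f p.1 * g p.2) := by
  apply Measure.prod_eq
  intro s t hs ht
  rw [withDensity_apply _ (hs.prod ht), ← Measure.prod_restrict,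
    lintegral_prod_mul hf.aemeasurable hg.aemeasurable,
    withDensity_apply _ hs, withDensity_apply _ ht]


noncomputable def phiAux (a b : ℝ) : ℝ :=
  (if b < a then 1 else 0) + (1/2) * (if a = b then 1 else 0)

lemma phiAux_nonneg (a b : ℝ) : 0 ≤ phiAux a b := by
  unfold phiAux; split_ifs <;> norm_num

lemma phiAux_le_one (a b : ℝ) : phiAux a b ≤ 1 := by
  unfold phiAux; split_ifs with h1 h2 <;> try norm_num
  rw [h2] at h1; exact absurd h1 (lt_irrefl _)

lemma phiAux_swap (a b : ℝ) : phiAux b a = 1 - phiAux a b := by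
  rcases lt_trichotomy a b with h | h | h
  · simp [phiAux, h, h.ne, h.ne', asymm h]
  · simp [phiAux, h, lt_irrefl]
    norm_num
  · simp [phiAux, h, h.ne, h.ne', asymm h]

lemma phiAux_mul_le {t a b : ℝ} (ht0 : 0 ≤ t) (ht1 : t ≤ 1) :
    t * (a - b) ≤ phiAux a b * (a - b) := by
  rcases lt_trichotomy a b with h | h | h
  · have h0 : phiAux a b = 0 := by simp [phiAux, h, h.ne, asymm h]
    rw [h0, zero_mul]
    exact mul_nonpos_of_nonneg_of_nonpos ht0 (by linarith)
  · simp [h]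
  · have h1 : phiAux a b = 1 := by simp [phiAux, h, h.ne', asymm h]
    rw [h1, one_mul]
    nlinarith

/-- the risk score `r(z) = P(D=1 | Z=z)` maximizes the concordance
(with ties weighted 1/2) among all measurable scalar transformations of the covariates:
for any measurable `g`,
`P(g(Z₁) > g(Z₂) | D₁=1, D₂=0) + (1/2) P(g(Z₁) = g(Z₂) | D₁=1, D₂=0)`
is at most the corresponding quantity for `r`. -/
theorem stmt9 {Ω E : Type*} [MeasurableSpace Ω] [mE : MeasurableSpace E]
    (μ : Measure Ω) [IsProbabilityMeasure μ]
    (Z : Ω → E) (hZ : Measurable Z)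
    (D : Set Ω) (hD : MeasurableSet D) (hD1 : 0 < μ D) (hD2 : μ D < 1)
    (r : E → ℝ) (hr : Measurable r)
    -- r(Z) is a version of the conditional probability P(D = 1 | Z) = E[D | Z]
    (hrisk : (fun ω => r (Z ω)) =ᵐ[μ]
      μ[D.indicator (fun _ => (1:ℝ)) | MeasurableSpace.comap Z mE])
    (g : E → ℝ) (hg : Measurable g) :
    ((μ.prod μ)[|D ×ˢ Dᶜ] {p | g (Z p.1) > g (Z p.2)}).toReal
      + (1/2) * ((μ.prod μ)[|D ×ˢ Dᶜ] {p | g (Z p.1) = g (Z p.2)}).toReal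
    ≤ ((μ.prod μ)[|D ×ˢ Dᶜ] {p | r (Z p.1) > r (Z p.2)}).toReal
      + (1/2) * ((μ.prod μ)[|D ×ˢ Dᶜ] {p | r (Z p.1) = r (Z p.2)}).toReal := by
  classical
  have hm : MeasurableSpace.comap Z mE ≤ ‹MeasurableSpace Ω› := hZ.comap_le
  set ν : Measure E := μ.map Z with hν_def
  haveI : IsProbabilityMeasure ν := Measure.isProbabilityMeasure_map hZ.aemeasurable
  -- integrability of the indicator
  have hind : Integrable (D.indicator (fun _ => (1:ℝ))) μ :=
    (integrable_const (1:ℝ)).indicator hD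
  -- integrability of r ∘ Z
  have hintrZ : Integrable (fun ω => r (Z ω)) μ :=
    (integrable_condExp (m := MeasurableSpace.comap Z mE)).congr hrisk.symm
  have hintr : Integrable r ν := by
    rw [hν_def]
    exact (integrable_map_measure hr.aestronglyMeasurable hZ.aemeasurable).mpr hintrZ
  -- r ∘ Z ∈ [0,1] a.e.
  have h01μ : ∀ᵐ ω ∂μ, 0 ≤ r (Z ω) ∧ r (Z ω) ≤ 1 := by
    have h0 : 0 ≤ᵐ[μ] μ[D.indicator (fun _ => (1:ℝ)) | MeasurableSpace.comap Z mE] :=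
      condExp_nonneg (ae_of_all _ fun ω => Set.indicator_nonneg (fun _ _ => zero_le_one) ω)
    have h1 : μ[D.indicator (fun _ => (1:ℝ)) | MeasurableSpace.comap Z mE]
        ≤ᵐ[μ] μ[(fun _ => (1:ℝ)) | MeasurableSpace.comap Z mE] := by
      refine condExp_mono hind (integrable_const 1) (ae_of_all _ fun ω => ?_)
      by_cases hω : ω ∈ D <;> simp [Set.indicator_apply, hω]
    rw [condExp_const hm (1:ℝ)] at h1
    filter_upwards [hrisk, h0, h1] with ω hω h0ω h1ω
    rw [hω]
    exact ⟨h0ω, h1ω⟩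
  have h01ν : ∀ᵐ z ∂ν, 0 ≤ r z ∧ r z ≤ 1 := by
    rw [hν_def, ae_map_iff hZ.aemeasurable]
    · exact h01μ
    · exact (measurableSet_le measurable_const hr).inter (measurableSet_le hr measurable_const)
  -- the case/control measures on E
  set μ₁ : Measure E := (μ.restrict D).map Z with hμ₁_def
  set μ₀ : Measure E := (μ.restrict Dᶜ).map Z with hμ₀_def
  set ρ₁ : E → ℝ≥0∞ := fun z => ENNReal.ofReal (r z) with hρ₁_def
  set ρ₀ : E → ℝ≥0∞ := fun z => ENNReal.ofReal (1 - r z) with hρ₀_def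
  have hρ₁m : Measurable ρ₁ := ENNReal.measurable_ofReal.comp hr
  have hρ₀m : Measurable ρ₀ := ENNReal.measurable_ofReal.comp (measurable_const.sub hr)
  have key1 : ∀ B : Set E, MeasurableSet B →
      ∫ ω in Z ⁻¹' B, r (Z ω) ∂μ = (μ (Z ⁻¹' B ∩ D)).toReal := by
    intro B hB
    have hs : MeasurableSet[MeasurableSpace.comap Z mE] (Z ⁻¹' B) := ⟨B, hB, rfl⟩
    calc ∫ ω in Z ⁻¹' B, r (Z ω) ∂μ
        = ∫ ω in Z ⁻¹' B,
            (μ[D.indicator (fun _ => (1:ℝ)) | MeasurableSpace.comap Z mE]) ω ∂μ :=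
          integral_congr_ae (ae_restrict_of_ae hrisk)
      _ = ∫ ω in Z ⁻¹' B, D.indicator (fun _ => (1:ℝ)) ω ∂μ := setIntegral_condExp hm hind hs
      _ = ∫ _ω in (Z ⁻¹' B) ∩ D, (1:ℝ) ∂μ := setIntegral_indicator hD
      _ = (μ (Z ⁻¹' B ∩ D)).toReal := by simp [measureReal_def]
  have hμ₁ : μ₁ = ν.withDensity ρ₁ := by
    ext B hB
    rw [hμ₁_def, Measure.map_apply hZ hB, Measure.restrict_apply (hZ hB),
      withDensity_apply _ hB, hν_def, setLIntegral_map hB hρ₁m hZ]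
    have hnn : 0 ≤ᵐ[μ.restrict (Z ⁻¹' B)] fun ω => r (Z ω) :=
      ae_restrict_of_ae (h01μ.mono fun ω h => h.1)
    simp only [hρ₁_def]
    rw [← ofReal_integral_eq_lintegral_ofReal hintrZ.restrict hnn, key1 B hB,
      ENNReal.ofReal_toReal (measure_ne_top _ _)]
  have hμ₀ : μ₀ = ν.withDensity ρ₀ := by
    ext B hB
    rw [hμ₀_def, Measure.map_apply hZ hB, Measure.restrict_apply (hZ hB),
      withDensity_apply _ hB, hν_def, setLIntegral_map hB hρ₀m hZ]
    have hnn : 0 ≤ᵐ[μ.restrict (Z ⁻¹' B)] fun ω => 1 - r (Z ω) :=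
      ae_restrict_of_ae (h01μ.mono fun ω h => by simp only [Pi.zero_apply]; linarith [h.2])
    have hint' : Integrable (fun ω => 1 - r (Z ω)) (μ.restrict (Z ⁻¹' B)) :=
      (integrable_const 1).sub hintrZ.restrict
    have hcompl : ∫ ω in Z ⁻¹' B, (1 - r (Z ω)) ∂μ = (μ (Z ⁻¹' B ∩ Dᶜ)).toReal := by
      have hsplit : μ (Z ⁻¹' B ∩ D) + μ (Z ⁻¹' B ∩ Dᶜ) = μ (Z ⁻¹' B) := by
        rw [← Set.diff_eq]
        exact measure_inter_add_diff _ hD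
      have h1 : ∫ ω in Z ⁻¹' B, (1 - r (Z ω)) ∂μ
          = (μ (Z ⁻¹' B)).toReal - ∫ ω in Z ⁻¹' B, r (Z ω) ∂μ := by
        rw [integral_sub (integrable_const 1) hintrZ.restrict]
        simp [measureReal_def]
      rw [h1, key1 B hB, ← hsplit, ENNReal.toReal_add (measure_ne_top _ _) (measure_ne_top _ _)]
      ring
    simp only [hρ₀_def]
    rw [← ofReal_integral_eq_lintegral_ofReal hint' hnn, hcompl,
      ENNReal.ofReal_toReal (measure_ne_top _ _)]
  -- transfer the numerators to E × E
  have hnum : ∀ B : Set (E × E), MeasurableSet B →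
      (μ.prod μ) ((D ×ˢ Dᶜ) ∩ ((fun p : Ω × Ω => (Z p.1, Z p.2)) ⁻¹' B)) = (μ₁.prod μ₀) B := by
    intro B hB
    have hZZ : Measurable (Prod.map Z Z) := hZ.prodMap hZ
    rw [hμ₁_def, hμ₀_def, Measure.map_prod_map _ _ hZ hZ,
      Measure.map_apply hZZ hB, Measure.prod_restrict,
      Measure.restrict_apply (hZZ hB), Set.inter_comm]
    rfl
  -- the product measure as a density over ν ⊗ ν
  haveI : IsFiniteMeasure μ₁ := by
    rw [hμ₁_def]; infer_instance
  haveI : IsFiniteMeasure μ₀ := by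
    rw [hμ₀_def]; infer_instance
  haveI hfin1 : IsFiniteMeasure (ν.withDensity ρ₁) := hμ₁ ▸ ‹IsFiniteMeasure μ₁›
  haveI hfin0 : IsFiniteMeasure (ν.withDensity ρ₀) := hμ₀ ▸ ‹IsFiniteMeasure μ₀›
  have hprod : μ₁.prod μ₀ = (ν.prod ν).withDensity (fun p => ρ₁ p.1 * ρ₀ p.2) := by
    rw [hμ₁, hμ₀]
    exact prod_withDensity_aux ν ν hρ₁m hρ₀m
  -- real-valued weight
  set wR : E × E → ℝ := fun p => r p.1 * (1 - r p.2) with hwR_def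
  have hwRm : Measurable wR := (hr.comp measurable_fst).mul
    (measurable_const.sub (hr.comp measurable_snd))
  -- a.e. coordinatewise bounds on ν ⊗ ν
  have hSm : MeasurableSet {z : E | 0 ≤ r z ∧ r z ≤ 1} :=
    (measurableSet_le measurable_const hr).inter (measurableSet_le hr measurable_const)
  have hS0 : ν {z : E | 0 ≤ r z ∧ r z ≤ 1}ᶜ = 0 := by
    have := ae_iff.mp h01ν
    simpa [Set.compl_setOf] using this
  have hco1 : ∀ᵐ p ∂(ν.prod ν), 0 ≤ r p.1 ∧ r p.1 ≤ 1 := by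
    rw [ae_iff]
    have : {p : E × E | ¬(0 ≤ r p.1 ∧ r p.1 ≤ 1)}
        = {z : E | 0 ≤ r z ∧ r z ≤ 1}ᶜ ×ˢ (univ : Set E) := by
      ext p; simp [Set.mem_prod]
    rw [this, Measure.prod_prod, hS0, zero_mul]
  have hco2 : ∀ᵐ p ∂(ν.prod ν), 0 ≤ r p.2 ∧ r p.2 ≤ 1 := by
    rw [ae_iff]
    have : {p : E × E | ¬(0 ≤ r p.2 ∧ r p.2 ≤ 1)}
        = (univ : Set E) ×ˢ {z : E | 0 ≤ r z ∧ r z ≤ 1}ᶜ := by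
      ext p; simp [Set.mem_prod]
    rw [this, Measure.prod_prod, hS0, mul_zero]
  have hwR_nn : 0 ≤ᵐ[ν.prod ν] wR := by
    filter_upwards [hco1, hco2] with p h1 h2
    exact mul_nonneg h1.1 (by linarith [h2.2])
  have hwR_le : ∀ᵐ p ∂(ν.prod ν), wR p ≤ 1 := by
    filter_upwards [hco1, hco2] with p h1 h2
    have : wR p ≤ 1 * 1 := by
      apply mul_le_mul h1.2 (by linarith [h2.1]) (by linarith [h2.2]) zero_le_one
    linarith
  have hwR_int : Integrable wR (ν.prod ν) := by
    refine (integrable_const (1:ℝ)).mono' hwRm.aestronglyMeasurable ?_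
    filter_upwards [hwR_nn, hwR_le] with p h1 h2
    rw [Real.norm_eq_abs, abs_of_nonneg h1]; exact h2
  -- measure of a set as a real integral
  have hmeas_int : ∀ B : Set (E × E), MeasurableSet B →
      ((μ₁.prod μ₀) B).toReal = ∫ p in B, wR p ∂(ν.prod ν) := by
    intro B hB
    rw [hprod, withDensity_apply _ hB]
    have hae : (fun p : E × E => ρ₁ p.1 * ρ₀ p.2)
        =ᵐ[(ν.prod ν).restrict B] fun p => ENNReal.ofReal (wR p) := by
      refine ae_restrict_of_ae ?_
      filter_upwards [hco1] with p h1
      simp only [hρ₁_def, hρ₀_def, hwR_def]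
      rw [← ENNReal.ofReal_mul h1.1]
    rw [lintegral_congr_ae hae,
      ← ofReal_integral_eq_lintegral_ofReal hwR_int.restrict (ae_restrict_of_ae hwR_nn),
      ENNReal.toReal_ofReal (integral_nonneg_of_ae (ae_restrict_of_ae hwR_nn))]
  -- r-coordinates are integrable on the product
  have hr1_int : Integrable (fun p : E × E => r p.1) (ν.prod ν) := by
    have hmap : Measure.map Prod.fst (ν.prod ν) = ν := by
      rw [Measure.map_fst_prod]; simp
    exact (integrable_map_measure (by rw [hmap]; exact hr.aestronglyMeasurable)
      measurable_fst.aemeasurable).mp (by rw [hmap]; exact hintr)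
  have hr2_int : Integrable (fun p : E × E => r p.2) (ν.prod ν) := by
    have hmap : Measure.map Prod.snd (ν.prod ν) = ν := by
      rw [Measure.map_snd_prod]; simp
    exact (integrable_map_measure (by rw [hmap]; exact hr.aestronglyMeasurable)
      measurable_snd.aemeasurable).mp (by rw [hmap]; exact hintr)
  -- the concordance score functions
  have key : ∀ h : E → ℝ, Measurable h →
      (∫ p in {p : E × E | h p.1 > h p.2}, wR p ∂(ν.prod ν))
        + (1/2) * (∫ p in {p : E × E | h p.1 = h p.2}, wR p ∂(ν.prod ν))
      = ∫ p, ((if h p.2 < h p.1 then (1:ℝ) else 0)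
          + (1/2) * (if h p.1 = h p.2 then (1:ℝ) else 0)) * wR p ∂(ν.prod ν) := by
    intro h hh
    have hlt : MeasurableSet {p : E × E | h p.1 > h p.2} :=
      measurableSet_lt (hh.comp measurable_snd) (hh.comp measurable_fst)
    have heq : MeasurableSet {p : E × E | h p.1 = h p.2} :=
      measurableSet_eq_fun (hh.comp measurable_fst) (hh.comp measurable_snd)
    rw [← integral_indicator hlt, ← integral_indicator heq, ← integral_const_mul,
      ← integral_add (hwR_int.indicator hlt) ((hwR_int.indicator heq).const_mul (1/2))]
    refine integral_congr_ae (ae_of_all _ fun p => ?_)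
    by_cases h1 : h p.2 < h p.1
    · simp [Set.indicator_apply, Set.mem_setOf_eq, h1, (ne_of_gt h1)]
    · by_cases h2 : h p.1 = h p.2 <;>
        simp [Set.indicator_apply, Set.mem_setOf_eq, h1, h2] <;> ring
  have main : ∀ h : E → ℝ, Measurable h →
      (∫ p, ((if h p.2 < h p.1 then (1:ℝ) else 0)
          + (1/2) * (if h p.1 = h p.2 then (1:ℝ) else 0)) * wR p ∂(ν.prod ν))
      ≤ ∫ p, ((if r p.2 < r p.1 then (1:ℝ) else 0)
          + (1/2) * (if r p.1 = r p.2 then (1:ℝ) else 0)) * wR p ∂(ν.prod ν) := by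
    have hwR'_int : Integrable (fun p : E × E => r p.2 * (1 - r p.1)) (ν.prod ν) := by
      refine (integrable_const (1:ℝ)).mono'
        ((hr.comp measurable_snd).mul
          (measurable_const.sub (hr.comp measurable_fst))).aestronglyMeasurable ?_
      filter_upwards [hco1, hco2] with p h1 h2
      rw [Real.norm_eq_abs, abs_of_nonneg (mul_nonneg h2.1 (by linarith [h1.2]))]
      calc r p.2 * (1 - r p.1) ≤ 1 * 1 :=
            mul_le_mul h2.2 (by linarith [h1.1]) (by linarith [h1.2]) zero_le_one
        _ = 1 := mul_one 1
    have hphi_m : ∀ u v : E × E → ℝ, Measurable u → Measurable v →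
        Measurable (fun p => phiAux (u p) (v p)) := by
      intro u v hu hv
      unfold phiAux
      exact (Measurable.ite (measurableSet_lt hv hu) measurable_const measurable_const).add
        ((Measurable.ite (measurableSet_eq_fun hu hv) measurable_const
          measurable_const).const_mul _)
    have hphi_bdd : ∀ u v : E × E → ℝ, ∃ C, ∀ p, ‖phiAux (u p) (v p)‖ ≤ C := by
      intro u v
      exact ⟨1, fun p => by
        rw [Real.norm_eq_abs, abs_of_nonneg (phiAux_nonneg _ _)]; exact phiAux_le_one _ _⟩
    have hphiwr_int : ∀ h' : E → ℝ, Measurable h' →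
        Integrable (fun p : E × E => phiAux (h' p.1) (h' p.2) * wR p) (ν.prod ν) := by
      intro h' hh'
      exact hwR_int.bdd_mul
        ((hphi_m _ _ (hh'.comp measurable_fst) (hh'.comp measurable_snd)).aestronglyMeasurable)
        (ae_of_all _ (hphi_bdd (fun p => h' p.1) (fun p => h' p.2)).choose_spec)
    have hphiwr'_int : ∀ h' : E → ℝ, Measurable h' →
        Integrable (fun p : E × E => phiAux (h' p.2) (h' p.1) * (r p.2 * (1 - r p.1)))
          (ν.prod ν) := by
      intro h' hh'
      exact hwR'_int.bdd_mul
        ((hphi_m _ _ (hh'.comp measurable_snd) (hh'.comp measurable_fst)).aestronglyMeasurable)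
        (ae_of_all _ (hphi_bdd (fun p => h' p.2) (fun p => h' p.1)).choose_spec)
    have hphid_int : ∀ h' : E → ℝ, Measurable h' →
        Integrable (fun p : E × E => phiAux (h' p.1) (h' p.2) * (r p.1 - r p.2)) (ν.prod ν) := by
      intro h' hh'
      exact (hr1_int.sub hr2_int).bdd_mul
        ((hphi_m _ _ (hh'.comp measurable_fst) (hh'.comp measurable_snd)).aestronglyMeasurable)
        (ae_of_all _ (hphi_bdd (fun p => h' p.1) (fun p => h' p.2)).choose_spec)
    have sym : ∀ h' : E → ℝ, Measurable h' →
        2 * (∫ p, phiAux (h' p.1) (h' p.2) * wR p ∂(ν.prod ν))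
        = (∫ p, phiAux (h' p.1) (h' p.2) * (r p.1 - r p.2) ∂(ν.prod ν))
          + ∫ p, r p.2 * (1 - r p.1) ∂(ν.prod ν) := by
      intro h' hh'
      have hswap : ∫ p, phiAux (h' p.1) (h' p.2) * wR p ∂(ν.prod ν)
          = ∫ p, phiAux (h' p.2) (h' p.1) * (r p.2 * (1 - r p.1)) ∂(ν.prod ν) := by
        have hmp := (Measure.measurePreserving_swap (μ := ν) (ν := ν)).integral_comp
          MeasurableEquiv.prodComm.measurableEmbedding
          (fun p : E × E => phiAux (h' p.1) (h' p.2) * wR p)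
        exact hmp.symm
      calc 2 * (∫ p, phiAux (h' p.1) (h' p.2) * wR p ∂(ν.prod ν))
          = (∫ p, phiAux (h' p.1) (h' p.2) * wR p ∂(ν.prod ν))
            + ∫ p, phiAux (h' p.2) (h' p.1) * (r p.2 * (1 - r p.1)) ∂(ν.prod ν) := by
            rw [← hswap]; ring
        _ = ∫ p, (phiAux (h' p.1) (h' p.2) * wR p
              + phiAux (h' p.2) (h' p.1) * (r p.2 * (1 - r p.1))) ∂(ν.prod ν) :=
            (integral_add (hphiwr_int h' hh') (hphiwr'_int h' hh')).symm
        _ = ∫ p, (phiAux (h' p.1) (h' p.2) * (r p.1 - r p.2)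
              + r p.2 * (1 - r p.1)) ∂(ν.prod ν) := by
            refine integral_congr_ae (ae_of_all _ fun p => ?_)
            dsimp only
            rw [phiAux_swap (h' p.1) (h' p.2)]
            simp only [hwR_def]
            ring
        _ = (∫ p, phiAux (h' p.1) (h' p.2) * (r p.1 - r p.2) ∂(ν.prod ν))
            + ∫ p, r p.2 * (1 - r p.1) ∂(ν.prod ν) :=
            integral_add (hphid_int h' hh') hwR'_int
    intro h hh
    have e1 := sym h hh
    have e2 := sym r hr
    have hmono : (∫ p, phiAux (h p.1) (h p.2) * (r p.1 - r p.2) ∂(ν.prod ν))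
        ≤ ∫ p, phiAux (r p.1) (r p.2) * (r p.1 - r p.2) ∂(ν.prod ν) :=
      integral_mono (hphid_int h hh) (hphid_int r hr) fun p =>
        phiAux_mul_le (phiAux_nonneg _ _) (phiAux_le_one _ _)
    show (∫ p, phiAux (h p.1) (h p.2) * wR p ∂(ν.prod ν))
        ≤ ∫ p, phiAux (r p.1) (r p.2) * wR p ∂(ν.prod ν)
    linarith
  -- assemble
  have hBgm : MeasurableSet {q : E × E | g q.1 > g q.2} :=
    measurableSet_lt (hg.comp measurable_snd) (hg.comp measurable_fst)
  have hBgem : MeasurableSet {q : E × E | g q.1 = g q.2} :=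
    measurableSet_eq_fun (hg.comp measurable_fst) (hg.comp measurable_snd)
  have hBrm : MeasurableSet {q : E × E | r q.1 > r q.2} :=
    measurableSet_lt (hr.comp measurable_snd) (hr.comp measurable_fst)
  have hBrem : MeasurableSet {q : E × E | r q.1 = r q.2} :=
    measurableSet_eq_fun (hr.comp measurable_fst) (hr.comp measurable_snd)
  have hsm : MeasurableSet (D ×ˢ Dᶜ) := hD.prod hD.compl
  set c : ℝ := (((μ.prod μ) (D ×ˢ Dᶜ))⁻¹).toReal with hc_def
  have hc0 : 0 ≤ c := ENNReal.toReal_nonneg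
  have hterm : ∀ B : Set (E × E), MeasurableSet B →
      (((μ.prod μ)[|D ×ˢ Dᶜ] ((fun p : Ω × Ω => (Z p.1, Z p.2)) ⁻¹' B)).toReal)
        = c * ∫ p in B, wR p ∂(ν.prod ν) := by
    intro B hB
    rw [cond_apply hsm, hnum B hB, ENNReal.toReal_mul, hmeas_int B hB]
  have hAg := hterm _ hBgm
  have hAge := hterm _ hBgem
  have hAr := hterm _ hBrm
  have hAre := hterm _ hBrem
  have hsetg : {p : Ω × Ω | g (Z p.1) > g (Z p.2)}
      = (fun p : Ω × Ω => (Z p.1, Z p.2)) ⁻¹' {q : E × E | g q.1 > g q.2} := rfl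
  have hsetge : {p : Ω × Ω | g (Z p.1) = g (Z p.2)}
      = (fun p : Ω × Ω => (Z p.1, Z p.2)) ⁻¹' {q : E × E | g q.1 = g q.2} := rfl
  have hsetr : {p : Ω × Ω | r (Z p.1) > r (Z p.2)}
      = (fun p : Ω × Ω => (Z p.1, Z p.2)) ⁻¹' {q : E × E | r q.1 > r q.2} := rfl
  have hsetre : {p : Ω × Ω | r (Z p.1) = r (Z p.2)}
      = (fun p : Ω × Ω => (Z p.1, Z p.2)) ⁻¹' {q : E × E | r q.1 = r q.2} := rfl
  rw [hsetg, hsetge, hsetr, hsetre, hAg, hAge, hAr, hAre]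
  have hkg := key g hg
  have hkr := key r hr
  have hineq := main g hg
  calc c * (∫ p in {p : E × E | g p.1 > g p.2}, wR p ∂(ν.prod ν))
        + 1 / 2 * (c * ∫ p in {p : E × E | g p.1 = g p.2}, wR p ∂(ν.prod ν))
      = c * ((∫ p in {p : E × E | g p.1 > g p.2}, wR p ∂(ν.prod ν))
        + (1/2) * ∫ p in {p : E × E | g p.1 = g p.2}, wR p ∂(ν.prod ν)) := by ring
    _ = c * ∫ p, ((if g p.2 < g p.1 then (1:ℝ) else 0)
          + (1/2) * (if g p.1 = g p.2 then (1:ℝ) else 0)) * wR p ∂(ν.prod ν) := by rw [hkg]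
    _ ≤ c * ∫ p, ((if r p.2 < r p.1 then (1:ℝ) else 0)
          + (1/2) * (if r p.1 = r p.2 then (1:ℝ) else 0)) * wR p ∂(ν.prod ν) :=
        mul_le_mul_of_nonneg_left hineq hc0
    _ = c * ((∫ p in {p : E × E | r p.1 > r p.2}, wR p ∂(ν.prod ν))
        + (1/2) * ∫ p in {p : E × E | r p.1 = r p.2}, wR p ∂(ν.prod ν)) := by rw [hkr]
    _ = c * (∫ p in {p : E × E | r p.1 > r p.2}, wR p ∂(ν.prod ν))
        + 1 / 2 * (c * ∫ p in {p : E × E | r p.1 = r p.2}, wR p ∂(ν.prod ν)) := by ring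
end

section
/- With weight ω(t) = f(t)S(t)/P(T₂ > T₁, T₁ < s), where f and S are the marginal density and survival function of the continuous survival time T, the integrated concordance ICON(g) = ∫₀ˢ ω(t) CON_t(g(t,·)) dt equals P(g(T₁, Z₁(T₁)) > g(T₁, Z₂(T₁)) | T₂ > T₁, T₁ < s) + (1/2)P(g(T₁, Z₁(T₁)) = g(T₁, Z₂(T₁)) | T₂ > T₁, T₁ < s). -/
open MeasureTheory ProbabilityTheory Filter Set Topology

open scoped ENNReal NNReal

lemma stmt12_aux {Ω E : Type*} [MeasurableSpace Ω] [MeasurableSpace E]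
    (μ : Measure Ω) [IsProbabilityMeasure μ]
    (T : Ω → ℝ) (hT : Measurable T) (hTnn : ∀ ω, 0 ≤ T ω)
    (Z : ℝ → Ω → E) (hZ : Measurable fun p : ℝ × Ω => Z p.1 p.2)
    (f : ℝ → ℝ) (hf : Measurable f)
    (hdens : Measure.map T μ = volume.withDensity fun t => ENNReal.ofReal (f t))
    (ν : ProbabilityTheory.Kernel ℝ E) [ProbabilityTheory.IsMarkovKernel ν]
    (hdisint : Measure.map (fun ω => (T ω, Z (T ω) ω)) μ
      = Measure.compProd (Measure.map T μ) ν)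
    (s : ℝ) (hs : 0 < s)
    (W : Set (ℝ × E × E)) (hW : MeasurableSet W) :
    ∃ G : ℝ → ℝ≥0∞, Measurable G ∧
      (∀ t, t < s → G t = μ {ω | t < T ω} *
        ((ν t).prod ((μ[|{ω | t < T ω}]).map (Z t))) {y : E × E | (t, y) ∈ W}) ∧
      (∀ t, G t ≤ 1) ∧
      (μ.prod μ) {p : Ω × Ω | T p.1 < T p.2 ∧ T p.1 < s ∧
          (T p.1, Z (T p.1) p.1, Z (T p.1) p.2) ∈ W}
        = ∫⁻ t in Ioo (0:ℝ) s, ENNReal.ofReal (f t) * G t := by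
  have hu : ∀ t : ℝ, MeasurableSet {ω | t < T ω} := fun t =>
    measurableSet_lt measurable_const hT
  -- finiteness of the conditional measure
  have hfin : ∀ t : ℝ, IsFiniteMeasure (μ[|{ω | t < T ω}]) := by
    intro t
    constructor
    rw [ProbabilityTheory.cond_apply (hu t), Set.inter_univ]
    rcases eq_or_ne (μ {ω | t < T ω}) 0 with h | h
    · simp [h]
    · rw [ENNReal.inv_mul_cancel h (measure_ne_top μ _)]
      exact ENNReal.one_lt_top
  set D : Set ((ℝ × E) × Ω) :=
    {q | q.1.1 < T q.2 ∧ q.1.1 < s ∧ (q.1.1, q.1.2, Z q.1.1 q.2) ∈ W} with hDdef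
  have hD : MeasurableSet D := by
    apply MeasurableSet.inter
    · exact measurableSet_lt (measurable_fst.fst) (hT.comp measurable_snd)
    apply MeasurableSet.inter
    · exact measurableSet_lt (measurable_fst.fst) measurable_const
    · exact (measurable_fst.fst.prodMk (measurable_fst.snd.prodMk
        (hZ.comp (measurable_fst.fst.prodMk measurable_snd)))) hW
  set F : ℝ × E → ℝ≥0∞ := fun q => μ (Prod.mk q ⁻¹' D) with hFdef
  have hF : Measurable F := measurable_measure_prodMk_left hD
  set G : ℝ → ℝ≥0∞ := fun t => ∫⁻ x, F (t, x) ∂(ν t) with hGdef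
  have hG : Measurable G := by
    apply Measurable.lintegral_kernel_prod_right
    exact hF.comp (measurable_id)
  have hFle : ∀ q, F q ≤ 1 := fun q => prob_le_one
  have hGle : ∀ t, G t ≤ 1 := by
    intro t
    calc G t ≤ ∫⁻ _x, 1 ∂(ν t) := lintegral_mono fun x => hFle _
    _ = 1 := by simp
  -- pointwise identification of G for t < s
  have hGt : ∀ t, t < s → G t = μ {ω | t < T ω} *
      ((ν t).prod ((μ[|{ω | t < T ω}]).map (Z t))) {y : E × E | (t, y) ∈ W} := by
    intro t ht
    haveI := hfin t
    have hZt : Measurable (Z t) := hZ.comp (measurable_const.prodMk measurable_id)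
    set m := (μ[|{ω | t < T ω}]).map (Z t) with hmdef
    have hW' : MeasurableSet {p : E × E | (t, p) ∈ W} :=
      (measurable_const.prodMk measurable_id) hW
    have claim1 : ∀ x : E, F (t, x) = μ {ω | t < T ω} * m {y : E | (t, x, y) ∈ W} := by
      intro x
      have hB : MeasurableSet {y : E | (t, x, y) ∈ W} :=
        (measurable_const.prodMk (measurable_const.prodMk measurable_id)) hW
      have hset : Prod.mk (t, x) ⁻¹' D = {ω | t < T ω} ∩ Z t ⁻¹' {y : E | (t, x, y) ∈ W} := by
        ext ω
        simp only [hDdef, Set.mem_preimage, Set.mem_setOf_eq, Set.mem_inter_iff]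
        tauto
      rw [hFdef]
      simp only
      rw [hset, hmdef, Measure.map_apply hZt hB, ProbabilityTheory.cond_apply (hu t)]
      rcases eq_or_ne (μ {ω | t < T ω}) 0 with h | h
      · rw [h, zero_mul]
        exact measure_inter_null_of_null_left _ h
      · rw [← mul_assoc, ENNReal.mul_inv_cancel h (measure_ne_top μ _), one_mul]
    calc G t = ∫⁻ x, μ {ω | t < T ω} * m {y : E | (t, x, y) ∈ W} ∂(ν t) :=
          lintegral_congr claim1
      _ = μ {ω | t < T ω} * ∫⁻ x, m (Prod.mk x ⁻¹' {p : E × E | (t, p) ∈ W}) ∂(ν t) := by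
          rw [← lintegral_const_mul _ (measurable_measure_prodMk_left hW')]
          rfl
      _ = μ {ω | t < T ω} * ((ν t).prod m) {p : E × E | (t, p) ∈ W} := by
          rw [Measure.prod_apply hW']
  refine ⟨G, hG, hGt, hGle, ?_⟩
  -- main computation
  have hψ : Measurable fun ω => (T ω, Z (T ω) ω) :=
    hT.prodMk (hZ.comp (hT.prodMk measurable_id))
  have hA : MeasurableSet {p : Ω × Ω | T p.1 < T p.2 ∧ T p.1 < s ∧
      (T p.1, Z (T p.1) p.1, Z (T p.1) p.2) ∈ W} := by
    have : Measurable fun p : Ω × Ω => ((T p.1, Z (T p.1) p.1), p.2) :=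
      (hψ.comp measurable_fst).prodMk measurable_snd
    exact this hD
  have step1 : (μ.prod μ) {p : Ω × Ω | T p.1 < T p.2 ∧ T p.1 < s ∧
      (T p.1, Z (T p.1) p.1, Z (T p.1) p.2) ∈ W}
      = ∫⁻ ω₁, F (T ω₁, Z (T ω₁) ω₁) ∂μ := by
    rw [Measure.prod_apply hA]
    rfl
  have step2 : ∫⁻ ω₁, F (T ω₁, Z (T ω₁) ω₁) ∂μ = ∫⁻ t, G t ∂(Measure.map T μ) := by
    rw [← lintegral_map hF hψ, hdisint, Measure.lintegral_compProd hF]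
  have step3 : ∫⁻ t, G t ∂(Measure.map T μ)
      = ∫⁻ t, ENNReal.ofReal (f t) * G t ∂volume := by
    rw [hdens, lintegral_withDensity_eq_lintegral_mul volume hf.ennreal_ofReal hG]
    rfl
  -- G vanishes for t ≥ s
  have hGzero : ∀ t, ¬ t < s → G t = 0 := by
    intro t ht
    rw [hGdef]
    simp only
    have : ∀ x : E, F (t, x) = 0 := by
      intro x
      rw [hFdef]
      simp only
      convert measure_empty
      · ext ω; simp only [hDdef, Set.mem_preimage, Set.mem_setOf_eq, Set.mem_empty_iff_false,
          iff_false]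
        tauto
      · infer_instance
    simp [this]
  have step4 : ∫⁻ t, ENNReal.ofReal (f t) * G t ∂volume
      = ∫⁻ t in Iio s, ENNReal.ofReal (f t) * G t ∂volume := by
    rw [← lintegral_indicator measurableSet_Iio]
    apply lintegral_congr
    intro t
    by_cases ht : t < s
    · rw [Set.indicator_of_mem (Set.mem_Iio.mpr ht)]
    · rw [Set.indicator_of_notMem (fun h => ht (Set.mem_Iio.mp h)), hGzero t ht, mul_zero]
  -- f vanishes a.e. on Iic 0
  have hf0 : ∫⁻ t in Iic (0:ℝ), ENNReal.ofReal (f t) ∂volume = 0 := by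
    have h1 : ∫⁻ t in Iic (0:ℝ), ENNReal.ofReal (f t) ∂volume
        = (volume.withDensity fun t => ENNReal.ofReal (f t)) (Iic 0) :=
      (withDensity_apply _ measurableSet_Iic).symm
    rw [h1, ← hdens, Measure.map_apply hT measurableSet_Iic]
    have hset : T ⁻¹' (Iic 0) = T ⁻¹' {0} := by
      ext ω
      simp only [Set.mem_preimage, Set.mem_Iic, Set.mem_singleton_iff]
      exact ⟨fun h => le_antisymm h (hTnn ω), fun h => h.le⟩
    rw [hset, ← Measure.map_apply hT (measurableSet_singleton 0), hdens,
      withDensity_apply _ (measurableSet_singleton 0),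
      setLIntegral_measure_zero _ _ Real.volume_singleton]
  have hIic : ∫⁻ t in Iic (0:ℝ), ENNReal.ofReal (f t) * G t ∂volume = 0 := by
    apply le_antisymm _ (zero_le)
    calc ∫⁻ t in Iic (0:ℝ), ENNReal.ofReal (f t) * G t ∂volume
        ≤ ∫⁻ t in Iic (0:ℝ), ENNReal.ofReal (f t) ∂volume := by
          apply lintegral_mono
          intro t
          calc ENNReal.ofReal (f t) * G t ≤ ENNReal.ofReal (f t) * 1 :=
                mul_le_mul' le_rfl (hGle t)
          _ = ENNReal.ofReal (f t) := mul_one _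
    _ = 0 := hf0
  have hsplit : Iio s = Iic (0:ℝ) ∪ Ioo 0 s := by
    ext x
    simp only [Set.mem_Iio, Set.mem_union, Set.mem_Iic, Set.mem_Ioo]
    constructor
    · intro h
      rcases le_or_gt x 0 with h0 | h0
      · exact Or.inl h0
      · exact Or.inr ⟨h0, h⟩
    · rintro (h | ⟨_, h⟩)
      · linarith
      · exact h
  rw [step1, step2, step3, step4, hsplit,
    lintegral_union measurableSet_Ioo (by
      rw [Set.disjoint_left]
      rintro x hx ⟨h1, _⟩
      exact absurd hx (not_le.mpr h1)), hIic, zero_add]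

/-- With weight `ω(t) = f(t)S(t)/P(T₂ > T₁, T₁ < s)`, where `f` and `S` are
the marginal density and survival function of the continuous survival time `T`, the
integrated concordance `ICON(g) = ∫₀ˢ ω(t) CON_t(g(t,·)) dt` equals
`P(g(T₁,Z₁(T₁)) > g(T₁,Z₂(T₁)) | T₂ > T₁, T₁ < s)
 + (1/2) P(g(T₁,Z₁(T₁)) = g(T₁,Z₂(T₁)) | T₂ > T₁, T₁ < s)`.
Conditioning on `T₁ = t` is via the disintegration kernel `ν` of `(T, Z(T))`. -/
theorem stmt12 {Ω E : Type*} [MeasurableSpace Ω] [MeasurableSpace E]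
    (μ : Measure Ω) [IsProbabilityMeasure μ]
    (T : Ω → ℝ) (hT : Measurable T) (hTnn : ∀ ω, 0 ≤ T ω)
    (Z : ℝ → Ω → E) (hZ : Measurable fun p : ℝ × Ω => Z p.1 p.2)
    (g : ℝ → E → ℝ) (hg : Measurable fun p : ℝ × E => g p.1 p.2)
    -- T has density f and survival function S
    (f : ℝ → ℝ) (hf : Measurable f) (hfnn : 0 ≤ f)
    (hdens : Measure.map T μ = volume.withDensity fun t => ENNReal.ofReal (f t))
    (S : ℝ → ℝ) (hS : S = fun t => (μ {ω | t < T ω}).toReal)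
    -- ν t is the conditional law of Z(t) given T = t
    (ν : ProbabilityTheory.Kernel ℝ E) [ProbabilityTheory.IsMarkovKernel ν]
    (hdisint : Measure.map (fun ω => (T ω, Z (T ω) ω)) μ
      = Measure.compProd (Measure.map T μ) ν)
    (s : ℝ) (hs : 0 < s)
    (c : ℝ) (hc : c = ((μ.prod μ) {p | T p.1 < T p.2 ∧ T p.1 < s}).toReal) (hcpos : 0 < c)
    -- the time-t concordance CON_t(g(t,·)) between a case (T₁ = t) and a control (T₂ > t)
    (CONt : ℝ → ℝ)
    (hCONt : ∀ t, CONt t =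
      (((ν t).prod ((μ[|{ω | t < T ω}]).map (Z t))) {p | g t p.1 > g t p.2}).toReal
      + (1/2) *
        (((ν t).prod ((μ[|{ω | t < T ω}]).map (Z t))) {p | g t p.1 = g t p.2}).toReal) :
    ∫ t in Ioc (0:ℝ) s, (f t * S t / c) * CONt t
    = ((μ.prod μ)[|{p | T p.1 < T p.2 ∧ T p.1 < s}]
        {p | g (T p.1) (Z (T p.1) p.1) > g (T p.1) (Z (T p.1) p.2)}).toReal
      + (1/2) * ((μ.prod μ)[|{p | T p.1 < T p.2 ∧ T p.1 < s}]
        {p | g (T p.1) (Z (T p.1) p.1) = g (T p.1) (Z (T p.1) p.2)}).toReal := by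
  -- the two relation sets
  set W₁ : Set (ℝ × E × E) := {q | g q.1 q.2.1 > g q.1 q.2.2} with hW₁def
  set W₂ : Set (ℝ × E × E) := {q | g q.1 q.2.1 = g q.1 q.2.2} with hW₂def
  have hm1 : Measurable fun q : ℝ × E × E => g q.1 q.2.1 :=
    hg.comp (measurable_fst.prodMk measurable_snd.fst)
  have hm2 : Measurable fun q : ℝ × E × E => g q.1 q.2.2 :=
    hg.comp (measurable_fst.prodMk measurable_snd.snd)
  have hW₁ : MeasurableSet W₁ := measurableSet_lt hm2 hm1
  have hW₂ : MeasurableSet W₂ := measurableSet_eq_fun hm1 hm2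
  obtain ⟨G₁, mG₁, hG₁, hG₁le, key₁⟩ :=
    stmt12_aux μ T hT hTnn Z hZ f hf hdens ν hdisint s hs W₁ hW₁
  obtain ⟨G₂, mG₂, hG₂, hG₂le, key₂⟩ :=
    stmt12_aux μ T hT hTnn Z hZ f hf hdens ν hdisint s hs W₂ hW₂
  set C : Set (Ω × Ω) := {p | T p.1 < T p.2 ∧ T p.1 < s} with hCdef
  have hC : MeasurableSet C :=
    (measurableSet_lt (hT.comp measurable_fst) (hT.comp measurable_snd)).inter
      (measurableSet_lt (hT.comp measurable_fst) measurable_const)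
  set B₁ : Set (Ω × Ω) := {p | g (T p.1) (Z (T p.1) p.1) > g (T p.1) (Z (T p.1) p.2)}
  set B₂ : Set (Ω × Ω) := {p | g (T p.1) (Z (T p.1) p.1) = g (T p.1) (Z (T p.1) p.2)}
  have hCB₁ : C ∩ B₁ = {p : Ω × Ω | T p.1 < T p.2 ∧ T p.1 < s ∧
      (T p.1, Z (T p.1) p.1, Z (T p.1) p.2) ∈ W₁} := by
    ext p
    exact ⟨fun ⟨⟨h1, h2⟩, h3⟩ => ⟨h1, h2, h3⟩, fun ⟨h1, h2, h3⟩ => ⟨⟨h1, h2⟩, h3⟩⟩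
  have hCB₂ : C ∩ B₂ = {p : Ω × Ω | T p.1 < T p.2 ∧ T p.1 < s ∧
      (T p.1, Z (T p.1) p.1, Z (T p.1) p.2) ∈ W₂} := by
    ext p
    exact ⟨fun ⟨⟨h1, h2⟩, h3⟩ => ⟨h1, h2, h3⟩, fun ⟨h1, h2, h3⟩ => ⟨⟨h1, h2⟩, h3⟩⟩
  -- pointwise identity on Ioo 0 s
  have hG₁top : ∀ t, G₁ t ≠ ⊤ := fun t => (lt_of_le_of_lt (hG₁le t) ENNReal.one_lt_top).ne
  have hG₂top : ∀ t, G₂ t ≠ ⊤ := fun t => (lt_of_le_of_lt (hG₂le t) ENNReal.one_lt_top).ne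
  have hpt : ∀ t ∈ Ioo (0:ℝ) s, (f t * S t / c) * CONt t
      = c⁻¹ * ((ENNReal.ofReal (f t) * G₁ t).toReal
          + (1/2) * (ENNReal.ofReal (f t) * G₂ t).toReal) := by
    intro t ht
    have h1 : (ENNReal.ofReal (f t) * G₁ t).toReal = f t * (S t *
        (((ν t).prod ((μ[|{ω | t < T ω}]).map (Z t))) {p | g t p.1 > g t p.2}).toReal) := by
      rw [hG₁ t ht.2, ENNReal.toReal_mul, ENNReal.toReal_mul,
        ENNReal.toReal_ofReal (hfnn t), hS]
      rfl
    have h2 : (ENNReal.ofReal (f t) * G₂ t).toReal = f t * (S t *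
        (((ν t).prod ((μ[|{ω | t < T ω}]).map (Z t))) {p | g t p.1 = g t p.2}).toReal) := by
      rw [hG₂ t ht.2, ENNReal.toReal_mul, ENNReal.toReal_mul,
        ENNReal.toReal_ofReal (hfnn t), hS]
      rfl
    rw [h1, h2, hCONt t]
    ring
  have int₁ : Integrable (fun t => (ENNReal.ofReal (f t) * G₁ t).toReal)
      (volume.restrict (Ioo (0:ℝ) s)) := by
    apply integrable_toReal_of_lintegral_ne_top (f := fun t => ENNReal.ofReal (f t) * G₁ t)
      ((hf.ennreal_ofReal.mul mG₁).aemeasurable)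
    rw [← key₁]
    exact measure_ne_top _ _
  have int₂ : Integrable (fun t => (ENNReal.ofReal (f t) * G₂ t).toReal)
      (volume.restrict (Ioo (0:ℝ) s)) := by
    apply integrable_toReal_of_lintegral_ne_top (f := fun t => ENNReal.ofReal (f t) * G₂ t)
      ((hf.ennreal_ofReal.mul mG₂).aemeasurable)
    rw [← key₂]
    exact measure_ne_top _ _
  have ae₁ : ∀ᵐ t ∂(volume.restrict (Ioo (0:ℝ) s)), ENNReal.ofReal (f t) * G₁ t < ⊤ :=
    ae_of_all _ fun t => ENNReal.mul_lt_top ENNReal.ofReal_lt_top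
      ((hG₁le t).trans_lt ENNReal.one_lt_top)
  have ae₂ : ∀ᵐ t ∂(volume.restrict (Ioo (0:ℝ) s)), ENNReal.ofReal (f t) * G₂ t < ⊤ :=
    ae_of_all _ fun t => ENNReal.mul_lt_top ENNReal.ofReal_lt_top
      ((hG₂le t).trans_lt ENNReal.one_lt_top)
  have hint₁ : ∫ t in Ioo (0:ℝ) s, (ENNReal.ofReal (f t) * G₁ t).toReal
      = ((μ.prod μ) (C ∩ B₁)).toReal := by
    rw [integral_toReal (f := fun t => ENNReal.ofReal (f t) * G₁ t) ((hf.ennreal_ofReal.mul mG₁).aemeasurable) ae₁, ← key₁, hCB₁]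
  have hint₂ : ∫ t in Ioo (0:ℝ) s, (ENNReal.ofReal (f t) * G₂ t).toReal
      = ((μ.prod μ) (C ∩ B₂)).toReal := by
    rw [integral_toReal (f := fun t => ENNReal.ofReal (f t) * G₂ t) ((hf.ennreal_ofReal.mul mG₂).aemeasurable) ae₂, ← key₂, hCB₂]
  have LHS : ∫ t in Ioc (0:ℝ) s, (f t * S t / c) * CONt t
      = c⁻¹ * (((μ.prod μ) (C ∩ B₁)).toReal + (1/2) * ((μ.prod μ) (C ∩ B₂)).toReal) := by
    rw [MeasureTheory.integral_Ioc_eq_integral_Ioo,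
      setIntegral_congr_fun measurableSet_Ioo hpt, MeasureTheory.integral_const_mul,
      integral_add int₁ (int₂.const_mul _), MeasureTheory.integral_const_mul, hint₁, hint₂]
  rw [LHS, ProbabilityTheory.cond_apply hC, ProbabilityTheory.cond_apply hC]
  have hμC : (μ.prod μ) C = ENNReal.ofReal c := by
    rw [hc, ENNReal.ofReal_toReal (measure_ne_top _ _)]
  rw [hμC, ENNReal.toReal_mul, ENNReal.toReal_mul, ENNReal.toReal_inv,
    ENNReal.toReal_ofReal hcpos.le]
  ring
end
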